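/- arXiv:math-ph/0408034 — 5 statements merged into one kernel-verified Lean document; each statement's English description precedes it below -/
import Mathlib

section
/- If u_1,…,u_n, w_1,…,w_n and u'_1,…,u'_n, w'_1,…,w'_n are two symplectic bases of (V, ω) (i.e. ω(w_i, u_j) = δ_{ij}, ω(u_i, u_j) = ω(w_i, w_j) = 0, and likewise for the primed basis), then Σ_{i=1}^n ι_{u_i} ∘ ι_{w_i} = Σ_{i=1}^n ι_{u'_i} ∘ ι_{w'_i} as linear operators on Λ^m(V*) for every m. In other words, the operator f̂ := Σ_{i=1}^n ι_{u_i} ∘ ι_{w_i} is well defined independently of the choice of symplectic basis. -/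
/-! Euler–Lagrange cohomology paper, Statement 2.
Context: `(V, ω)` a real symplectic vector space of dimension `2n`; `Λ^m(V*)` is modelled by
`V [⋀^Fin m]→ₗ[ℝ] ℝ`; `wedge` is the wedge product of alternating forms (shuffle convention),
`ωpow ω k` is the `k`-fold wedge power `ω^k`, and `iprod v` is the interior product `ι_v`. -/

open scoped TensorProduct

variable {V : Type*} [AddCommGroup V] [Module ℝ V]

/-- The wedge product of real-valued alternating forms. -/
noncomputable def wedge {a b : ℕ} (f : V [⋀^Fin a]→ₗ[ℝ] ℝ) (g : V [⋀^Fin b]→ₗ[ℝ] ℝ) :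
    V [⋀^Fin (a + b)]→ₗ[ℝ] ℝ :=
  ((TensorProduct.lid ℝ ℝ).toLinearMap.compAlternatingMap (f.domCoprod g)).domDomCongr
    finSumFinEquiv

/-- The `k`-fold wedge power `ω^k` of a `2`-form, with `ω^0 = 1`. -/
noncomputable def ωpow (ω : V [⋀^Fin 2]→ₗ[ℝ] ℝ) : (k : ℕ) → V [⋀^Fin (2 * k)]→ₗ[ℝ] ℝ
  | 0 => AlternatingMap.constOfIsEmpty ℝ V (Fin 0) 1
  | (k + 1) => (wedge (ωpow ω k) ω).domDomCongr (finCongr (by ring))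

/-- The interior product (contraction) `ι_v` of an alternating form with a vector `v`. -/
noncomputable def iprod : {m : ℕ} → V → (V [⋀^Fin m]→ₗ[ℝ] ℝ) → V [⋀^Fin (m - 1)]→ₗ[ℝ] ℝ
  | 0, _, _ => 0
  | (_ + 1), v, α => α.curryLeft v

/-- Evaluation of an alternating map at a point, as a linear map. -/
noncomputable def evalA {k : ℕ} (t : Fin k → V) : (V [⋀^Fin k]→ₗ[ℝ] ℝ) →ₗ[ℝ] ℝ where
  toFun γ := γ t
  map_add' _ _ := rfl
  map_smul' _ _ := rfl

/-- The bilinear map obtained from an alternating `(k+2)`-form by fixing the last `k`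
arguments. -/
noncomputable def bilOf {k : ℕ} (α : V [⋀^Fin (k+2)]→ₗ[ℝ] ℝ) (t : Fin k → V) :
    V →ₗ[ℝ] V →ₗ[ℝ] ℝ :=
  LinearMap.mk₂ ℝ (fun x y => α (Matrix.vecCons x (Matrix.vecCons y t)))
    (fun x x' y => by
      show α.curryLeft (x + x') _ = α.curryLeft x _ + α.curryLeft x' _
      rw [map_add]; rfl)
    (fun c x y => by
      show α.curryLeft (c • x) _ = c • α.curryLeft x _
      rw [map_smul]; rfl)
    (fun x y y' => by
      show (α.curryLeft x).curryLeft (y + y') t = _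
      rw [map_add]; rfl)
    (fun c x y => by
      show (α.curryLeft x).curryLeft (c • y) t = _
      rw [map_smul]; rfl)

omit [AddCommGroup V] [Module ℝ V] in
lemma swap_cons {k : ℕ} (x y : V) (t : Fin k → V) :
    (Matrix.vecCons y (Matrix.vecCons x t)) ∘ Equiv.swap (0 : Fin (k+2)) 1
      = Matrix.vecCons x (Matrix.vecCons y t) := by
  funext j
  refine Fin.cases ?_ (fun j => Fin.cases ?_ (fun j => ?_) j) j
  · simp [Equiv.swap_apply_left]
  · simp [Fin.succ_zero_eq_one, Equiv.swap_apply_right]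
  · have h0 : j.succ.succ ≠ (0 : Fin (k+2)) := Fin.succ_ne_zero _
    have h1 : j.succ.succ ≠ (1 : Fin (k+2)) := Fin.succ_succ_ne_one _
    simp [Equiv.swap_apply_of_ne_of_ne h0 h1]

lemma bilOf_skew {k : ℕ} (α : V [⋀^Fin (k+2)]→ₗ[ℝ] ℝ) (t : Fin k → V) :
    ∀ x y, bilOf α t x y = - bilOf α t y x := by
  intro x y
  have h := α.map_swap (Matrix.vecCons y (Matrix.vecCons x t))
    (show (0 : Fin (k+2)) ≠ 1 from Fin.zero_ne_one)
  rw [swap_cons] at h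
  exact h

/-- The key algebraic lemma: for a "symplectic-type" pairing `W` and any antisymmetric
bilinear form `B`, the contraction `∑ i, B (w i) (u i)` is independent of the choice of
symplectic basis. -/
lemma key_lemma {n : ℕ} (W B : V →ₗ[ℝ] V →ₗ[ℝ] ℝ)
    (hW : ∀ x y, W x y = - W y x) (hB : ∀ x y, B x y = - B y x)
    (u w u' w' : Fin n → V)
    (hexp : ∀ v : V, ∑ i, (W (w i) v • u i - W (u i) v • w i) = v)
    (hexp' : ∀ v : V, ∑ i, (W (w' i) v • u' i - W (u' i) v • w' i) = v) :
    ∑ i, B (w i) (u i) = ∑ i, B (w' i) (u' i) := by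
  have hA : ∀ i, B (w i) (u i)
      = ∑ k, (W (w' k) (u i) * B (w i) (u' k) - W (u' k) (u i) * B (w i) (w' k)) := by
    intro i
    conv_lhs => rw [← hexp' (u i)]
    rw [map_sum]
    refine Finset.sum_congr rfl fun k _ => ?_
    rw [map_sub, map_smul, map_smul]
    simp [smul_eq_mul]
  have hC1 : ∀ k, ∑ i, W (w' k) (u i) * B (w i) (u' k)
      = B (w' k) (u' k) - ∑ i, W (w i) (w' k) * B (u i) (u' k) := by
    intro k
    have e1 : (∑ i, W (u i) (w' k) • w i) = (∑ i, W (w i) (w' k) • u i) - w' k := by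
      have h := hexp (w' k)
      rw [Finset.sum_sub_distrib] at h
      calc (∑ i, W (u i) (w' k) • w i)
          = (∑ i, W (w i) (w' k) • u i)
            - ((∑ i, W (w i) (w' k) • u i) - (∑ i, W (u i) (w' k) • w i)) :=
            (sub_sub_cancel _ _).symm
        _ = (∑ i, W (w i) (w' k) • u i) - w' k := by rw [h]
    calc ∑ i, W (w' k) (u i) * B (w i) (u' k)
        = -(B (∑ i, W (u i) (w' k) • w i) (u' k)) := by
          rw [map_sum, LinearMap.sum_apply, ← Finset.sum_neg_distrib]
          refine Finset.sum_congr rfl fun i _ => ?_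
          rw [map_smul, LinearMap.smul_apply, smul_eq_mul, hW (w' k) (u i)]; ring
      _ = -(B ((∑ i, W (w i) (w' k) • u i) - w' k) (u' k)) := by rw [e1]
      _ = B (w' k) (u' k) - ∑ i, W (w i) (w' k) * B (u i) (u' k) := by
          rw [map_sub, LinearMap.sub_apply, map_sum, LinearMap.sum_apply]
          simp only [map_smul, LinearMap.smul_apply, smul_eq_mul]
          ring
  have hC2 : ∀ k, ∑ i, W (u' k) (u i) * B (w i) (w' k)
      = - B (w' k) (u' k) - ∑ i, W (w i) (u' k) * B (u i) (w' k) := by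
    intro k
    have e1 : (∑ i, W (u i) (u' k) • w i) = (∑ i, W (w i) (u' k) • u i) - u' k := by
      have h := hexp (u' k)
      rw [Finset.sum_sub_distrib] at h
      calc (∑ i, W (u i) (u' k) • w i)
          = (∑ i, W (w i) (u' k) • u i)
            - ((∑ i, W (w i) (u' k) • u i) - (∑ i, W (u i) (u' k) • w i)) :=
            (sub_sub_cancel _ _).symm
        _ = (∑ i, W (w i) (u' k) • u i) - u' k := by rw [h]
    calc ∑ i, W (u' k) (u i) * B (w i) (w' k)
        = -(B (∑ i, W (u i) (u' k) • w i) (w' k)) := by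
          rw [map_sum, LinearMap.sum_apply, ← Finset.sum_neg_distrib]
          refine Finset.sum_congr rfl fun i _ => ?_
          rw [map_smul, LinearMap.smul_apply, smul_eq_mul, hW (u' k) (u i)]; ring
      _ = -(B ((∑ i, W (w i) (u' k) • u i) - u' k) (w' k)) := by rw [e1]
      _ = - B (w' k) (u' k) - ∑ i, W (w i) (u' k) * B (u i) (w' k) := by
          rw [map_sub, LinearMap.sub_apply, map_sum, LinearMap.sum_apply]
          simp only [map_smul, LinearMap.smul_apply, smul_eq_mul]
          rw [hB (u' k) (w' k)]
          ring
  have hD : ∀ i, ∑ k, (W (w i) (u' k) * B (u i) (w' k) - W (w i) (w' k) * B (u i) (u' k))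
      = - B (w i) (u i) := by
    intro i
    have e2 : ∑ k, (W (w i) (u' k) • w' k - W (w i) (w' k) • u' k) = w i := by
      calc ∑ k, (W (w i) (u' k) • w' k - W (w i) (w' k) • u' k)
          = ∑ k, (W (w' k) (w i) • u' k - W (u' k) (w i) • w' k) := by
            refine Finset.sum_congr rfl fun k _ => ?_
            rw [hW (w' k) (w i), hW (u' k) (w i)]
            simp only [neg_smul]
            abel
        _ = w i := hexp' (w i)
    calc ∑ k, (W (w i) (u' k) * B (u i) (w' k) - W (w i) (w' k) * B (u i) (u' k))
        = B (u i) (∑ k, (W (w i) (u' k) • w' k - W (w i) (w' k) • u' k)) := by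
          rw [map_sum]
          refine (Finset.sum_congr rfl fun k _ => ?_).symm
          rw [map_sub, map_smul, map_smul]; simp [smul_eq_mul]
      _ = B (u i) (w i) := by rw [e2]
      _ = - B (w i) (u i) := hB _ _
  have hmain : ∑ i, B (w i) (u i)
      = 2 * (∑ k, B (w' k) (u' k)) - ∑ i, B (w i) (u i) := by
    calc ∑ i, B (w i) (u i)
        = ∑ i, ∑ k, (W (w' k) (u i) * B (w i) (u' k) - W (u' k) (u i) * B (w i) (w' k)) :=
          Finset.sum_congr rfl fun i _ => hA i
      _ = ∑ k, ∑ i, (W (w' k) (u i) * B (w i) (u' k) - W (u' k) (u i) * B (w i) (w' k)) :=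
          Finset.sum_comm
      _ = ∑ k, ((∑ i, W (w' k) (u i) * B (w i) (u' k))
            - ∑ i, W (u' k) (u i) * B (w i) (w' k)) := by
          refine Finset.sum_congr rfl fun k _ => ?_
          rw [Finset.sum_sub_distrib]
      _ = ∑ k, (2 * B (w' k) (u' k)
            + ∑ i, (W (w i) (u' k) * B (u i) (w' k) - W (w i) (w' k) * B (u i) (u' k))) := by
          refine Finset.sum_congr rfl fun k _ => ?_
          rw [hC1 k, hC2 k, Finset.sum_sub_distrib]; ring
      _ = 2 * (∑ k, B (w' k) (u' k))
            + ∑ k, ∑ i, (W (w i) (u' k) * B (u i) (w' k) - W (w i) (w' k) * B (u i) (u' k)) := by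
          rw [Finset.sum_add_distrib, Finset.mul_sum]
      _ = 2 * (∑ k, B (w' k) (u' k))
            + ∑ i, ∑ k, (W (w i) (u' k) * B (u i) (w' k) - W (w i) (w' k) * B (u i) (u' k)) := by
          rw [Finset.sum_comm]
      _ = 2 * (∑ k, B (w' k) (u' k)) + ∑ i, -B (w i) (u i) := by
          rw [Finset.sum_congr rfl fun i _ => hD i]
      _ = 2 * (∑ k, B (w' k) (u' k)) - ∑ i, B (w i) (u i) := by
          rw [Finset.sum_neg_distrib]; ring
  linarith

/-- A symplectic basis gives the expansion `v = ∑ i, ω(wᵢ, v) uᵢ - ω(uᵢ, v) wᵢ`. -/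
lemma expansion {n : ℕ} (ω : V [⋀^Fin 2]→ₗ[ℝ] ℝ) (u w : Fin n → V)
    (hb : ∃ b : Module.Basis (Fin n ⊕ Fin n) ℝ V, ⇑b = Sum.elim u w)
    (h1 : ∀ i j, ω ![w i, u j] = if i = j then 1 else 0)
    (h2 : ∀ i j, ω ![u i, u j] = 0) (h3 : ∀ i j, ω ![w i, w j] = 0) :
    ∀ v : V, ∑ i, (bilOf (k := 0) ω ![] (w i) v • u i
      - bilOf (k := 0) ω ![] (u i) v • w i) = v := by
  set Wb := bilOf (k := 0) ω ![] with hWb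
  have hWskew : ∀ x y : V, Wb x y = - Wb y x := bilOf_skew ω ![]
  have hWu : ∀ i j, Wb (w i) (u j) = if i = j then 1 else 0 := fun i j => h1 i j
  have hWuu : ∀ i j, Wb (u i) (u j) = 0 := fun i j => h2 i j
  have hWww : ∀ i j, Wb (w i) (w j) = 0 := fun i j => h3 i j
  have hWuw : ∀ i j, Wb (u i) (w j) = -(if j = i then 1 else 0) := by
    intro i j; rw [hWskew, hWu j i]
  obtain ⟨b, hbe⟩ := hb
  have hid : (∑ i, ((Wb (w i)).smulRight (u i) - (Wb (u i)).smulRight (w i)))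
      = LinearMap.id (R := ℝ) (M := V) := by
    apply b.ext
    intro j
    have hbj := congrFun hbe j
    cases j with
    | inl j =>
      rw [hbj]
      simp only [Sum.elim_inl, LinearMap.sum_apply, LinearMap.sub_apply,
        LinearMap.smulRight_apply, LinearMap.id_apply]
      simp [hWu, hWuu, ite_smul]
    | inr j =>
      rw [hbj]
      simp only [Sum.elim_inr, LinearMap.sum_apply, LinearMap.sub_apply,
        LinearMap.smulRight_apply, LinearMap.id_apply]
      simp [hWww, hWuw, ite_smul]
  intro v
  have := LinearMap.congr_fun hid v
  simpa only [LinearMap.sum_apply, LinearMap.sub_apply, LinearMap.smulRight_apply,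
    LinearMap.id_apply] using this

/-- the operator `f̂ = Σᵢ ι_{uᵢ} ∘ ι_{wᵢ}` on `Λ^m(V*)` does not depend on the
choice of symplectic basis `u₁,…,u_n, w₁,…,w_n` of `(V, ω)`. -/
theorem stmt2 (n : ℕ) (hn : 1 ≤ n) (V : Type*) [AddCommGroup V] [Module ℝ V]
    [FiniteDimensional ℝ V] (hdim : Module.finrank ℝ V = 2 * n)
    (ω : V [⋀^Fin 2]→ₗ[ℝ] ℝ) (hω : ∀ v : V, (∀ w : V, ω ![v, w] = 0) → v = 0)
    (u w u' w' : Fin n → V)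
    (hb : ∃ b : Module.Basis (Fin n ⊕ Fin n) ℝ V, ⇑b = Sum.elim u w)
    (hb' : ∃ b : Module.Basis (Fin n ⊕ Fin n) ℝ V, ⇑b = Sum.elim u' w')
    (h1 : ∀ i j, ω ![w i, u j] = if i = j then 1 else 0)
    (h2 : ∀ i j, ω ![u i, u j] = 0) (h3 : ∀ i j, ω ![w i, w j] = 0)
    (h1' : ∀ i j, ω ![w' i, u' j] = if i = j then 1 else 0)
    (h2' : ∀ i j, ω ![u' i, u' j] = 0) (h3' : ∀ i j, ω ![w' i, w' j] = 0) :
    ∀ (m : ℕ) (α : V [⋀^Fin m]→ₗ[ℝ] ℝ),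
      ∑ i, iprod (u i) (iprod (w i) α) = ∑ i, iprod (u' i) (iprod (w' i) α) := by
  have hexp := expansion ω u w hb h1 h2 h3
  have hexp' := expansion ω u' w' hb' h1' h2' h3'
  have hWskew : ∀ x y : V, bilOf (k := 0) ω ![] x y = - bilOf (k := 0) ω ![] y x :=
    bilOf_skew ω ![]
  intro m
  rcases m with _ | _ | k
  · intro α; simp [iprod]
  · intro α; simp [iprod]
  · intro α
    show (∑ i, (α.curryLeft (w i)).curryLeft (u i))
      = ∑ i, (α.curryLeft (w' i)).curryLeft (u' i)
    ext t
    rw [show ((∑ i, ((α.curryLeft (w i)).curryLeft (u i)))) t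
      = evalA t (∑ i, ((α.curryLeft (w i)).curryLeft (u i))) from rfl, map_sum]
    rw [show ((∑ i, ((α.curryLeft (w' i)).curryLeft (u' i)))) t
      = evalA t (∑ i, ((α.curryLeft (w' i)).curryLeft (u' i))) from rfl, map_sum]
    exact key_lemma (bilOf (k := 0) ω ![]) (bilOf α t) hWskew (bilOf_skew α t)
      u w u' w' hexp hexp'
end

section
/- The operators ê, f̂, ĥ on Λ*(V*) satisfy the sl(2) commutation relations: [ĥ, ê] = 2 ê, [ĥ, f̂] = −2 f̂, and [ê, f̂] = ĥ. -/
open scoped DirectSum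

set_option synthInstance.maxHeartbeats 1000000
set_option maxHeartbeats 1000000

variable {V : Type*} [AddCommGroup V] [Module ℝ V]

/-- `Λ*(V*)`, the exterior algebra of the dual space of `V`. -/
abbrev ExtForms (V : Type*) [AddCommGroup V] [Module ℝ V] :=
  ExteriorAlgebra ℝ (Module.Dual ℝ V)

/-- The interior product (contraction) with a vector `v ∈ V`, as an operator on `Λ*(V*)`. -/
noncomputable def psi (v : V) : Module.End ℝ (ExtForms V) :=
  CliffordAlgebra.contractLeft (Module.Dual.eval ℝ V v)

/-- Left exterior multiplication by a covector `f ∈ V*`, as an operator on `Λ*(V*)`: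
`χ_f(α) = f ∧ α`. -/
noncomputable def chi (f : Module.Dual ℝ V) : Module.End ℝ (ExtForms V) :=
  LinearMap.mulLeft ℝ (ExteriorAlgebra.ι ℝ f)

/-- The anticommutator `{S, T} = S ∘ T + T ∘ S` of two operators. -/
def acomm {M : Type*} [AddCommGroup M] [Module ℝ M] (S T : Module.End ℝ M) :
    Module.End ℝ M := S * T + T * S

/-- `ê`: right exterior multiplication by the symplectic form, `ê(α) = α ∧ ω`. -/
noncomputable def eHat (ωE : ExtForms V) : Module.End ℝ (ExtForms V) :=
  LinearMap.mulRight ℝ ωE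

/-- `f̂ = Σᵢ ι_{uᵢ} ∘ ι_{wᵢ}` for the symplectic basis `u i = b (Sum.inl i)`,
`w i = b (Sum.inr i)`. -/
noncomputable def fHat {n : ℕ} (b : Module.Basis (Fin n ⊕ Fin n) ℝ V) :
    Module.End ℝ (ExtForms V) :=
  ∑ i : Fin n, psi (b (Sum.inl i)) * psi (b (Sum.inr i))

/-- `ĥ`: the operator acting on `Λ^m(V*)` as multiplication by `m − n`, defined via the
grading of the exterior algebra. -/
noncomputable def hHat (n : ℕ) (V : Type*) [AddCommGroup V] [Module ℝ V] :
    Module.End ℝ (ExtForms V) :=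
  (DirectSum.decomposeLinearEquiv
      (fun m : ℕ => ⋀[ℝ]^m (Module.Dual ℝ V))).symm.toLinearMap ∘ₗ
    (DFinsupp.mapRange.linearMap fun m : ℕ =>
      (((m : ℝ) - (n : ℝ)) • LinearMap.id :
        ⋀[ℝ]^m (Module.Dual ℝ V) →ₗ[ℝ] ⋀[ℝ]^m (Module.Dual ℝ V))) ∘ₗ
    (DirectSum.decomposeLinearEquiv (fun m : ℕ => ⋀[ℝ]^m (Module.Dual ℝ V))).toLinearMap

/-- `ω = Σᵢ w^i ∧ u^i` as a degree-2 element of `Λ*(V*)`. -/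
noncomputable def ωElt {n : ℕ} (b : Module.Basis (Fin n ⊕ Fin n) ℝ V) : ExtForms V :=
  ∑ i : Fin n,
    ExteriorAlgebra.ι ℝ (b.dualBasis (Sum.inr i)) * ExteriorAlgebra.ι ℝ (b.dualBasis (Sum.inl i))


namespace Sl2Aux

open ExteriorAlgebra

lemma psi_ι_mul (v : V) (f : Module.Dual ℝ V) (x : ExtForms V) :
    psi v (ι ℝ f * x) = f v • x - ι ℝ f * psi v x := by
  simp [psi, CliffordAlgebra.contractLeft_ι_mul]

lemma psi_algebraMap (v : V) (r : ℝ) :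
    psi v (algebraMap ℝ (ExtForms V) r) = 0 := by
  simp [psi, CliffordAlgebra.contractLeft_algebraMap]

lemma ι_swap (f g : Module.Dual ℝ V) : ι ℝ f * ι ℝ g = -(ι ℝ g * ι ℝ f) :=
  eq_neg_of_add_eq_zero_left (ι_add_mul_swap f g)

lemma psi_chi (v : V) (f : Module.Dual ℝ V) :
    psi v * chi f + chi f * psi v = f v • (1 : Module.End ℝ (ExtForms V)) := by
  refine LinearMap.ext fun x => ?_
  simp only [LinearMap.add_apply, Module.End.mul_apply, chi, LinearMap.mulLeft_apply,
    LinearMap.smul_apply, Module.End.one_apply, psi_ι_mul]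
  abel

lemma psi_psi (v w : V) :
    psi v * psi w + psi w * psi v = (0 : Module.End ℝ (ExtForms V)) := by
  refine LinearMap.ext fun x => ?_
  simp only [LinearMap.add_apply, Module.End.mul_apply, LinearMap.zero_apply, psi]
  rw [CliffordAlgebra.contractLeft_comm]
  abel

lemma chi_chi (f g : Module.Dual ℝ V) :
    chi f * chi g + chi g * chi f = (0 : Module.End ℝ (ExtForms V)) := by
  refine LinearMap.ext fun x => ?_
  simp only [LinearMap.add_apply, Module.End.mul_apply, chi, LinearMap.mulLeft_apply,
    LinearMap.zero_apply, ← mul_assoc, ← add_mul, ι_add_mul_swap, zero_mul]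


lemma ι_mem_one (f : Module.Dual ℝ V) : ι ℝ f ∈ ⋀[ℝ]^1 (Module.Dual ℝ V) := by
  rw [exteriorPower, pow_one]
  exact LinearMap.mem_range_self _ f

lemma mul_mem_pow {p q : ℕ} {x y : ExtForms V} (hx : x ∈ ⋀[ℝ]^p (Module.Dual ℝ V))
    (hy : y ∈ ⋀[ℝ]^q (Module.Dual ℝ V)) : x * y ∈ ⋀[ℝ]^(p + q) (Module.Dual ℝ V) := by
  rw [exteriorPower, pow_add]
  exact Submodule.mul_mem_mul hx hy

lemma psi_mem_zero (v : V) {x : ExtForms V} (hx : x ∈ ⋀[ℝ]^0 (Module.Dual ℝ V)) :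
    psi v x = 0 := by
  rw [exteriorPower, pow_zero] at hx
  obtain ⟨r, rfl⟩ := Submodule.mem_one.mp hx
  exact psi_algebraMap v r

lemma psi_mem (v : V) {m : ℕ} {x : ExtForms V} (hx : x ∈ ⋀[ℝ]^m (Module.Dual ℝ V)) :
    psi v x ∈ ⋀[ℝ]^(m - 1) (Module.Dual ℝ V) := by
  induction hx using Submodule.pow_induction_on_left' with
  | algebraMap r => rw [psi_algebraMap]; exact Submodule.zero_mem _
  | add x y i hx hy ihx ihy => rw [map_add]; exact Submodule.add_mem _ ihx ihy
  | mem_mul g hg i y hy ih =>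
      obtain ⟨f, rfl⟩ := hg
      rw [psi_ι_mul]
      refine Submodule.sub_mem _ (Submodule.smul_mem _ _ hy) ?_
      match i with
      | 0 => rw [psi_mem_zero v hy, mul_zero]; exact Submodule.zero_mem _
      | k + 1 =>
          have h2 := mul_mem_pow (ι_mem_one f) ih
          have h3 : 1 + (k + 1 - 1) = (k + 1).succ - 1 := by omega
          rwa [h3] at h2

lemma end_ext {S T : Module.End ℝ (ExtForms V)}
    (h : ∀ (m : ℕ) (x : ExtForms V), x ∈ ⋀[ℝ]^m (Module.Dual ℝ V) → S x = T x) : S = T := by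
  refine LinearMap.ext fun x => ?_
  induction x using DirectSum.Decomposition.inductionOn
      (ℳ := fun m : ℕ => ⋀[ℝ]^m (Module.Dual ℝ V)) with
  | zero => simp
  | @homogeneous m y => exact h m y y.2
  | add x y hx hy => rw [map_add, map_add, hx, hy]

lemma hHat_apply_of_mem (n : ℕ) {m : ℕ} {x : ExtForms V}
    (hx : x ∈ ⋀[ℝ]^m (Module.Dual ℝ V)) : hHat n V x = ((m : ℝ) - n) • x := by
  have step1 : hHat n V x = (DirectSum.decompose (fun m : ℕ => ⋀[ℝ]^m (Module.Dual ℝ V))).symm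
      ((DFinsupp.mapRange.linearMap fun m : ℕ =>
        (((m : ℝ) - (n : ℝ)) • LinearMap.id :
          ⋀[ℝ]^m (Module.Dual ℝ V) →ₗ[ℝ] ⋀[ℝ]^m (Module.Dual ℝ V)))
        (DirectSum.decompose (fun m : ℕ => ⋀[ℝ]^m (Module.Dual ℝ V)) x)) := rfl
  rw [step1, DirectSum.decompose_of_mem (fun m : ℕ => ⋀[ℝ]^m (Module.Dual ℝ V)) hx]
  have step2 : (DFinsupp.mapRange.linearMap fun m : ℕ =>
        (((m : ℝ) - (n : ℝ)) • LinearMap.id :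
          ⋀[ℝ]^m (Module.Dual ℝ V) →ₗ[ℝ] ⋀[ℝ]^m (Module.Dual ℝ V)))
        (DirectSum.of (fun m : ℕ => ⋀[ℝ]^m (Module.Dual ℝ V)) m ⟨x, hx⟩) =
      DirectSum.of (fun m : ℕ => ⋀[ℝ]^m (Module.Dual ℝ V)) m (((m : ℝ) - (n : ℝ)) • ⟨x, hx⟩) := by
    exact DFinsupp.mapRange_single (hf := fun i => map_zero _)
  rw [step2, DirectSum.decompose_symm_of]
  rfl


lemma chi_apply (f : Module.Dual ℝ V) (x : ExtForms V) : chi f x = ι ℝ f * x := rfl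

/-- The number operator `N = Σ_a χ_{e^a} ψ_{e_a}`. -/
noncomputable def NOp {n : ℕ} (b : Module.Basis (Fin n ⊕ Fin n) ℝ V) : Module.End ℝ (ExtForms V) :=
  ∑ a : Fin n ⊕ Fin n, chi (b.dualBasis a) * psi (b a)

lemma NOp_apply_of_mem {n : ℕ} (b : Module.Basis (Fin n ⊕ Fin n) ℝ V) {m : ℕ} {x : ExtForms V}
    (hx : x ∈ ⋀[ℝ]^m (Module.Dual ℝ V)) : NOp b x = (m : ℝ) • x := by
  induction hx using Submodule.pow_induction_on_left' with
  | algebraMap r =>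
      simp only [NOp, LinearMap.sum_apply, Module.End.mul_apply, psi_algebraMap, map_zero,
        Finset.sum_const_zero, Nat.cast_zero, zero_smul]
  | add x y i hx hy ihx ihy => rw [map_add, ihx, ihy, ← smul_add]
  | mem_mul g hg i y hy ih =>
      obtain ⟨f, rfl⟩ := hg
      have key : ∀ a : Fin n ⊕ Fin n, (chi (b.dualBasis a) * psi (b a)) (ι ℝ f * y)
          = f (b a) • (ι ℝ (b.dualBasis a) * y)
            + ι ℝ f * ((chi (b.dualBasis a) * psi (b a)) y) := by
        intro a
        rw [Module.End.mul_apply, psi_ι_mul, map_sub, map_smul, chi_apply, chi_apply,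
          Module.End.mul_apply, chi_apply]
        have : ι ℝ (b.dualBasis a) * (ι ℝ f * psi (b a) y)
            = -(ι ℝ f * (ι ℝ (b.dualBasis a) * psi (b a) y)) := by
          rw [← mul_assoc, ι_swap (b.dualBasis a) f, neg_mul, mul_assoc]
        rw [this]
        abel
      have hsum : ∀ z : ExtForms V, NOp b z
          = ∑ a : Fin n ⊕ Fin n, (chi (b.dualBasis a) * psi (b a)) z := fun z => by
        rw [NOp, LinearMap.sum_apply]
      have hNy : (NOp b) (ι ℝ f * y) = ι ℝ f * y + ι ℝ f * NOp b y := by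
        rw [hsum, hsum]
        simp_rw [key]
        rw [Finset.sum_add_distrib, ← Finset.mul_sum]
        congr 1
        have hf : (∑ a : Fin n ⊕ Fin n, f (b a) • b.dualBasis a) = f := by
          have := b.dualBasis.sum_repr f
          simpa only [Module.Basis.dualBasis_repr] using this
        calc (∑ a : Fin n ⊕ Fin n, f (b a) • (ι ℝ (b.dualBasis a) * y))
            = (∑ a : Fin n ⊕ Fin n, f (b a) • ι ℝ (b.dualBasis a)) * y := by
              rw [Finset.sum_mul]
              simp_rw [smul_mul_assoc]
          _ = ι ℝ f * y := by
              simp_rw [← map_smul]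
              rw [← map_sum, hf]
      rw [hNy, ih, mul_smul_comm]
      push_cast
      rw [add_smul, one_smul, add_comm]


lemma mul_ιι_comm (f g : Module.Dual ℝ V) (x : ExtForms V) :
    x * (ι ℝ f * ι ℝ g) = ι ℝ f * ι ℝ g * x := by
  induction x using CliffordAlgebra.induction with
  | algebraMap r => rw [← Algebra.commutes]
  | ι h =>
      show ι ℝ h * (ι ℝ f * ι ℝ g) = ι ℝ f * ι ℝ g * ι ℝ h
      rw [← mul_assoc, ι_swap h f, neg_mul, mul_assoc, ι_swap h g, mul_neg, neg_neg, ← mul_assoc]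
  | mul a c ha hc =>
      rw [mul_assoc a c, hc, ← mul_assoc a, ha, mul_assoc, mul_assoc]
  | add a c ha hc => rw [add_mul, ha, hc, mul_add]

lemma eHat_eq {n : ℕ} (b : Module.Basis (Fin n ⊕ Fin n) ℝ V) :
    eHat (ωElt b) = ∑ i : Fin n, chi (b.dualBasis (Sum.inr i)) * chi (b.dualBasis (Sum.inl i)) := by
  refine LinearMap.ext fun x => ?_
  rw [eHat, LinearMap.mulRight_apply, ωElt, Finset.mul_sum, LinearMap.sum_apply]
  refine Finset.sum_congr rfl fun i _ => ?_
  rw [mul_ιι_comm, Module.End.mul_apply, chi_apply, chi_apply, mul_assoc]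

lemma comm4 {A : Type*} [Ring A] (a b c d u v : A)
    (hu : ∀ x, u * x = x * u) (hv : ∀ x, v * x = x * v)
    (hbc : b * c = u - c * b) (hac : a * c = -(c * a))
    (hbd : b * d = -(d * b)) (had : a * d = v - d * a) :
    a * b * (c * d) - c * d * (a * b) = u * (a * d) - v * (c * b) := by
  have e1 : a * b * (c * d) = a * ((b * c) * d) := by noncomm_ring
  rw [e1, hbc]
  have e2 : a * ((u - c * b) * d) = a * (u * d) - (a * c) * (b * d) := by noncomm_ring
  rw [e2, hac, hbd]
  have e3 : a * (u * d) = u * (a * d) := by rw [← mul_assoc, ← hu a, mul_assoc]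
  have e4 : -(c * a) * -(d * b) = (c * (a * d)) * b := by noncomm_ring
  rw [e3, e4, had]
  have e5 : c * (v - d * a) * b = c * (v * b) - c * d * (a * b) := by noncomm_ring
  rw [e5]
  have e6 : c * (v * b) = v * (c * b) := by rw [← mul_assoc, ← hv c, mul_assoc]
  rw [e6]
  abel


lemma EF_comm {n : ℕ} (b : Module.Basis (Fin n ⊕ Fin n) ℝ V) :
    eHat (ωElt b) * fHat b - fHat b * eHat (ωElt b)
      = NOp b - (n : ℝ) • (1 : Module.End ℝ (ExtForms V)) := by
  classical
  set A : Fin n → Module.End ℝ (ExtForms V) := fun i => chi (b.dualBasis (Sum.inr i)) with hA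
  set B : Fin n → Module.End ℝ (ExtForms V) := fun i => chi (b.dualBasis (Sum.inl i)) with hB
  set C : Fin n → Module.End ℝ (ExtForms V) := fun j => psi (b (Sum.inl j)) with hC
  set D : Fin n → Module.End ℝ (ExtForms V) := fun j => psi (b (Sum.inr j)) with hD
  have hδ : ∀ i j : Fin n, (fun r : ℝ => r • (1 : Module.End ℝ (ExtForms V))) 1 = 1 := by
    intro i j; simp
  -- anticommutators
  have hBC : ∀ i j, B i * C j
      = ((if j = i then (1:ℝ) else 0) • 1 : Module.End ℝ (ExtForms V)) - C j * B i := by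
    intro i j
    have h := psi_chi (b (Sum.inl j)) (b.dualBasis (Sum.inl i))
    rw [Module.Basis.dualBasis_apply_self] at h
    simp only [Sum.inl.injEq] at h
    exact eq_sub_of_add_eq' h
  have hAD : ∀ i j, A i * D j
      = ((if j = i then (1:ℝ) else 0) • 1 : Module.End ℝ (ExtForms V)) - D j * A i := by
    intro i j
    have h := psi_chi (b (Sum.inr j)) (b.dualBasis (Sum.inr i))
    rw [Module.Basis.dualBasis_apply_self] at h
    simp only [Sum.inr.injEq] at h
    exact eq_sub_of_add_eq' h
  have hAC : ∀ i j, A i * C j = -(C j * A i) := by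
    intro i j
    have h := psi_chi (b (Sum.inl j)) (b.dualBasis (Sum.inr i))
    rw [Module.Basis.dualBasis_apply_self] at h
    simp only [reduceCtorEq, if_false, zero_smul] at h
    exact eq_neg_of_add_eq_zero_right h
  have hBD : ∀ i j, B i * D j = -(D j * B i) := by
    intro i j
    have h := psi_chi (b (Sum.inr j)) (b.dualBasis (Sum.inl i))
    rw [Module.Basis.dualBasis_apply_self] at h
    simp only [reduceCtorEq, if_false, zero_smul] at h
    exact eq_neg_of_add_eq_zero_right h
  have hcent : ∀ (r : ℝ) (x : Module.End ℝ (ExtForms V)), (r • 1) * x = x * (r • 1) := by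
    intro r x; rw [smul_mul_assoc, one_mul, mul_smul_comm, mul_one]
  -- per-pair commutator
  have key : ∀ i j, A i * B i * (C j * D j) - C j * D j * (A i * B i)
      = (if j = i then (1:ℝ) else 0) • (A i * D j) - (if j = i then (1:ℝ) else 0) • (C j * B i) := by
    intro i j
    have h := comm4 (A i) (B i) (C j) (D j)
      ((if j = i then (1:ℝ) else 0) • 1) ((if j = i then (1:ℝ) else 0) • 1)
      (hcent _) (hcent _) (hBC i j) (hAC i j) (hBD i j) (hAD i j)
    rw [h, smul_mul_assoc, one_mul, smul_mul_assoc, one_mul]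
  have hE : eHat (ωElt b) = ∑ i, A i * B i := eHat_eq b
  have hF : fHat b = ∑ j, C j * D j := rfl
  rw [hE, hF, Finset.sum_mul_sum, Finset.sum_mul_sum]
  rw [Finset.sum_comm (f := fun j i => C j * D j * (A i * B i))]
  rw [← Finset.sum_sub_distrib]
  simp_rw [← Finset.sum_sub_distrib, key]
  have inner : ∀ i, (∑ j, ((if j = i then (1:ℝ) else 0) • (A i * D j)
      - (if j = i then (1:ℝ) else 0) • (C j * B i))) = A i * D i - C i * B i := by
    intro i
    rw [Finset.sum_sub_distrib]
    congr 1 <;>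
    · simp only [ite_smul, one_smul, zero_smul]
      rw [Finset.sum_ite_eq' Finset.univ i]
      simp
  simp_rw [inner]
  -- identify with NOp - n•1
  have hCB : ∀ i, C i * B i = 1 - B i * C i := by
    intro i
    rw [hBC i i]
    simp
  have : ∀ i, A i * D i - C i * B i = A i * D i + B i * C i - 1 := by
    intro i; rw [hCB]; abel
  simp_rw [this]
  rw [NOp, Fintype.sum_sum_type]
  rw [Finset.sum_sub_distrib, Finset.sum_add_distrib, Finset.sum_const, Finset.card_univ,
    Fintype.card_fin, Nat.cast_smul_eq_nsmul]
  abel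


lemma ωElt_mem {n : ℕ} (b : Module.Basis (Fin n ⊕ Fin n) ℝ V) :
    ωElt b ∈ ⋀[ℝ]^2 (Module.Dual ℝ V) := by
  rw [ωElt]
  refine Submodule.sum_mem _ fun i _ => ?_
  exact mul_mem_pow (ι_mem_one _) (ι_mem_one _)

lemma fHat_mem {n : ℕ} (b : Module.Basis (Fin n ⊕ Fin n) ℝ V) {m : ℕ} {x : ExtForms V}
    (hx : x ∈ ⋀[ℝ]^m (Module.Dual ℝ V)) : fHat b x ∈ ⋀[ℝ]^(m - 2) (Module.Dual ℝ V) := by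
  rw [fHat, LinearMap.sum_apply]
  refine Submodule.sum_mem _ fun j _ => ?_
  rw [Module.End.mul_apply]
  have h := psi_mem (b (Sum.inl j)) (psi_mem (b (Sum.inr j)) hx)
  have e : m - 1 - 1 = m - 2 := by omega
  rwa [e] at h

lemma fHat_mem_zero {n : ℕ} (b : Module.Basis (Fin n ⊕ Fin n) ℝ V) {x : ExtForms V}
    (hx : x ∈ ⋀[ℝ]^0 (Module.Dual ℝ V)) : fHat b x = 0 := by
  rw [fHat, LinearMap.sum_apply]
  refine Finset.sum_eq_zero fun j _ => ?_
  rw [Module.End.mul_apply, psi_mem_zero _ hx, map_zero]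

lemma fHat_mem_one {n : ℕ} (b : Module.Basis (Fin n ⊕ Fin n) ℝ V) {x : ExtForms V}
    (hx : x ∈ ⋀[ℝ]^1 (Module.Dual ℝ V)) : fHat b x = 0 := by
  rw [fHat, LinearMap.sum_apply]
  refine Finset.sum_eq_zero fun j _ => ?_
  rw [Module.End.mul_apply]
  exact psi_mem_zero _ (psi_mem (b (Sum.inr j)) hx)

end Sl2Aux

open Sl2Aux in
theorem stmt5' (n : ℕ) (V : Type*) [AddCommGroup V] [Module ℝ V]
    (b : Module.Basis (Fin n ⊕ Fin n) ℝ V) :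
    hHat n V * eHat (ωElt b) - eHat (ωElt b) * hHat n V = (2 : ℝ) • eHat (ωElt b) ∧
    hHat n V * fHat b - fHat b * hHat n V = (-2 : ℝ) • fHat b ∧
    eHat (ωElt b) * fHat b - fHat b * eHat (ωElt b) = hHat n V := by
  refine ⟨?_, ?_, ?_⟩
  · refine end_ext fun m x hx => ?_
    have hmem : x * ωElt b ∈ ⋀[ℝ]^(m + 2) (Module.Dual ℝ V) := mul_mem_pow hx (ωElt_mem b)
    rw [LinearMap.sub_apply, Module.End.mul_apply, Module.End.mul_apply, LinearMap.smul_apply]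
    rw [show eHat (ωElt b) x = x * ωElt b from rfl]
    rw [hHat_apply_of_mem n hmem, hHat_apply_of_mem n hx, map_smul]
    rw [show eHat (ωElt b) x = x * ωElt b from rfl, ← sub_smul]
    congr 1
    push_cast
    ring
  · refine end_ext fun m x hx => ?_
    rw [LinearMap.sub_apply, Module.End.mul_apply, Module.End.mul_apply, LinearMap.smul_apply,
      hHat_apply_of_mem n hx, map_smul]
    match m with
    | 0 => rw [fHat_mem_zero b hx]; simp
    | 1 => rw [fHat_mem_one b hx]; simp
    | k + 2 =>
        have hmem : fHat b x ∈ ⋀[ℝ]^k (Module.Dual ℝ V) := fHat_mem b hx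
        rw [hHat_apply_of_mem n hmem, ← sub_smul]
        congr 1
        push_cast
        ring
  · rw [EF_comm b]
    refine end_ext fun m x hx => ?_
    rw [LinearMap.sub_apply, LinearMap.smul_apply, Module.End.one_apply,
      NOp_apply_of_mem b hx, hHat_apply_of_mem n hx, ← sub_smul]


/-- the sl(2) commutation relations `[ĥ, ê] = 2ê`, `[ĥ, f̂] = −2f̂`,
`[ê, f̂] = ĥ`. -/
theorem stmt5 (n : ℕ) (hn : 1 ≤ n) (V : Type*) [AddCommGroup V] [Module ℝ V]
    [FiniteDimensional ℝ V] (hdim : Module.finrank ℝ V = 2 * n)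
    (ω : V [⋀^Fin 2]→ₗ[ℝ] ℝ) (hω : ∀ v : V, (∀ w : V, ω ![v, w] = 0) → v = 0)
    (b : Module.Basis (Fin n ⊕ Fin n) ℝ V)
    (h1 : ∀ i j, ω ![b (Sum.inr i), b (Sum.inl j)] = if i = j then 1 else 0)
    (h2 : ∀ i j, ω ![b (Sum.inl i), b (Sum.inl j)] = 0)
    (h3 : ∀ i j, ω ![b (Sum.inr i), b (Sum.inr j)] = 0) :
    hHat n V * eHat (ωElt b) - eHat (ωElt b) * hHat n V = (2 : ℝ) • eHat (ωElt b) ∧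
    hHat n V * fHat b - fHat b * hHat n V = (-2 : ℝ) • fHat b ∧
    eHat (ωElt b) * fHat b - fHat b * eHat (ωElt b) = hHat n V := by
  exact stmt5' n V b
end

section
/- Let n ≥ 2 and let α ∈ Λ²(V*) be an alternating 2-form on V. If α ∧ ω^k = 0 for some integer k with 0 ≤ k ≤ n−2 (i.e. k < n−1), then α = 0. -/
/-! Euler–Lagrange cohomology paper, Statement 7.
Context: `(V, ω)` a real symplectic vector space of dimension `2n`; `Λ^m(V*)` is modelled by
`V [⋀^Fin m]→ₗ[ℝ] ℝ`; `wedge` is the wedge product of alternating forms (shuffle convention),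
`ωpow ω k` is the `k`-fold wedge power `ω^k`, and `iprod v` is the interior product `ι_v`. -/

open scoped TensorProduct

variable {V : Type*} [AddCommGroup V] [Module ℝ V]

set_option linter.unusedSectionVars false
set_option linter.unusedVariables false
set_option maxHeartbeats 2000000

open Equiv Submodule Module

theorem pair_eq (v : Fin 2 → V) : v = ![v 0, v 1] := by
  funext i; fin_cases i <;> simp

theorem pair_update0 (x x' y : V) : Function.update ![x, y] 0 x' = ![x', y] := by
  funext i; fin_cases i <;> simp

theorem pair_update1 (x y y' : V) : Function.update ![x, y] 1 y' = ![x, y'] := by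
  funext i; fin_cases i <;> simp

variable (ω : V [⋀^Fin 2]→ₗ[ℝ] ℝ)

theorem form_self (x : V) : ω ![x, x] = 0 :=
  ω.map_eq_zero_of_eq _ (i := 0) (j := 1) (by simp) (by decide)

theorem form_antisymm (x y : V) : ω ![y, x] = - ω ![x, y] := by
  have h := ω.map_eq_zero_of_eq ![x + y, x + y] (i := 0) (j := 1) (by simp) (by decide)
  have hadd : ∀ a b c : V, ω ![a + b, c] = ω ![a, c] + ω ![b, c] := by
    intro a b c
    have := ω.map_update_add ![a, c] 0 a b
    simpa [pair_update0] using this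
  have hadd' : ∀ a b c : V, ω ![a, b + c] = ω ![a, b] + ω ![a, c] := by
    intro a b c
    have := ω.map_update_add ![a, b] 1 b c
    simpa [pair_update1] using this
  rw [hadd, hadd', hadd', form_self, form_self] at h
  linarith

theorem ωpow_succ_apply (k : ℕ) (x : Fin (2 * (k + 1)) → V) :
    ωpow ω (k + 1) x
      = wedge (ωpow ω k) ω (x ∘ finCongr (by ring : 2 * k + 2 = 2 * (k + 1))) := rfl

theorem wedge_apply {a b : ℕ} (f : V [⋀^Fin a]→ₗ[ℝ] ℝ) (g : V [⋀^Fin b]→ₗ[ℝ] ℝ)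
    (x : Fin (a + b) → V) :
    wedge f g x = ∑ σ : Equiv.Perm.ModSumCongr (Fin a) (Fin b),
      TensorProduct.lid ℝ ℝ (AlternatingMap.domCoprod.summand f g σ (x ∘ finSumFinEquiv)) := by
  unfold wedge
  rw [AlternatingMap.domDomCongr_apply, LinearMap.compAlternatingMap_apply,
    AlternatingMap.domCoprod_apply, MultilinearMap.sum_apply, map_sum]
  rfl

theorem summand_eval {a b : ℕ} (f : V [⋀^Fin a]→ₗ[ℝ] ℝ) (g : V [⋀^Fin b]→ₗ[ℝ] ℝ)
    (σ : Perm (Fin a ⊕ Fin b)) (y : Fin a ⊕ Fin b → V) :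
    TensorProduct.lid ℝ ℝ (AlternatingMap.domCoprod.summand f g (Quotient.mk'' σ) y)
      = Perm.sign σ • (f (fun i => y (σ (Sum.inl i))) * g (fun i => y (σ (Sum.inr i)))) := by
  rw [AlternatingMap.domCoprod.summand_mk'']
  simp only [MultilinearMap.smul_apply, MultilinearMap.domDomCongr_apply,
    MultilinearMap.domCoprod_apply, AlternatingMap.coe_multilinearMap]
  rw [Units.smul_def, ← Int.cast_smul_eq_zsmul ℝ, map_smul, TensorProduct.lid_tmul]
  rw [Units.smul_def (Perm.sign σ), ← Int.cast_smul_eq_zsmul ℝ]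
  rw [smul_eq_mul, smul_eq_mul, smul_eq_mul]

/-- key vanishing lemma: `ω^k` vanishes whenever one argument is `ω`-orthogonal
to all the others. -/
theorem ωpow_eq_zero : ∀ (k : ℕ) (x : Fin (2 * k) → V) (i : Fin (2 * k)),
    (∀ j, ω ![x i, x j] = 0) → ωpow ω k x = 0 := by
  intro k
  induction k with
  | zero => intro x i h; exact absurd i.isLt (by omega)
  | succ k ih =>
    intro x i h
    rw [ωpow_succ_apply, wedge_apply]
    apply Finset.sum_eq_zero
    intro q _
    induction q using Quotient.inductionOn' with
    | h σ =>
    rw [summand_eval]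
    set y : Fin (2 * k) ⊕ Fin 2 → V :=
      (x ∘ finCongr (by ring : 2 * k + 2 = 2 * (k + 1))) ∘ finSumFinEquiv with hy
    have hval : ∀ s : Fin (2 * k) ⊕ Fin 2, ∃ m, y s = x m :=
      fun s => ⟨_, rfl⟩
    obtain ⟨p₀, hp₀⟩ : ∃ p₀, y p₀ = x i := by
      refine ⟨finSumFinEquiv.symm ⟨i.val, by have := i.isLt; omega⟩, ?_⟩
      rw [hy]
      show x (finCongr _ (finSumFinEquiv (finSumFinEquiv.symm _))) = x i
      rw [Equiv.apply_symm_apply]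
      exact congrArg x (Fin.ext rfl)
    rcases hs : σ⁻¹ p₀ with t | t
    · have hσt : σ (Sum.inl t) = p₀ := by rw [← hs]; exact σ.apply_symm_apply p₀
      have h1 : y (σ (Sum.inl t)) = x i := by rw [hσt]; exact hp₀
      have hz : ωpow ω k (fun i' => y (σ (Sum.inl i'))) = 0 := by
        apply ih _ t
        intro j'
        show ω ![y (σ (Sum.inl t)), y (σ (Sum.inl j'))] = 0
        rw [h1]
        obtain ⟨m, hm⟩ := hval (σ (Sum.inl j'))
        rw [hm]
        exact h m
      rw [hz, zero_mul, smul_zero]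
    · have hσt : σ (Sum.inr t) = p₀ := by rw [← hs]; exact σ.apply_symm_apply p₀
      have h1 : y (σ (Sum.inr t)) = x i := by rw [hσt]; exact hp₀
      have hw : ω (fun i' => y (σ (Sum.inr i'))) = 0 := by
        set w : Fin 2 → V := fun i' => y (σ (Sum.inr i')) with hwdef
        rw [pair_eq w]
        obtain ⟨m0, hm0⟩ := hval (σ (Sum.inr 0))
        obtain ⟨m1, hm1⟩ := hval (σ (Sum.inr 1))
        have hw0 : w 0 = x m0 := hm0
        have hw1 : w 1 = x m1 := hm1
        fin_cases t
        · rw [show w 0 = x i from h1, hw1]; exact h m1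
        · rw [show w 1 = x i from h1, hw0, form_antisymm, h m0, neg_zero]
      rw [hw, mul_zero, smul_zero]

-- === slideDown machinery ===

def slideFun (p q i : ℕ) : ℕ :=
  if p ≤ i ∧ i < q then i + 1 else if i = q ∧ p ≤ q then p else i

def slideInv (p q i : ℕ) : ℕ :=
  if p < i ∧ i ≤ q then i - 1 else if i = p ∧ p ≤ q then q else i

theorem slideFun_lt {N p q i : ℕ} (hp : p < N) (hq : q < N) (hi : i < N) :
    slideFun p q i < N := by unfold slideFun; split_ifs <;> omega

theorem slideInv_lt {N p q i : ℕ} (hp : p < N) (hq : q < N) (hi : i < N) :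
    slideInv p q i < N := by unfold slideInv; split_ifs <;> omega

theorem slide_left_inv (p q i : ℕ) : slideInv p q (slideFun p q i) = i := by
  unfold slideFun slideInv; split_ifs <;> omega

theorem slide_right_inv (p q i : ℕ) : slideFun p q (slideInv p q i) = i := by
  unfold slideFun slideInv; split_ifs <;> omega

/-- The cycle sending `q ↦ p` and `i ↦ i+1` for `p ≤ i < q` (when `p ≤ q`). -/
def slideDown {N : ℕ} (p q : Fin N) : Equiv.Perm (Fin N) where
  toFun i := ⟨slideFun p.val q.val i.val, slideFun_lt p.isLt q.isLt i.isLt⟩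
  invFun i := ⟨slideInv p.val q.val i.val, slideInv_lt p.isLt q.isLt i.isLt⟩
  left_inv i := Fin.ext (slide_left_inv _ _ _)
  right_inv i := Fin.ext (slide_right_inv _ _ _)

theorem slideDown_val {N : ℕ} (p q i : Fin N) :
    (slideDown p q i).val = slideFun p.val q.val i.val := rfl

theorem slideDown_self {N : ℕ} (p : Fin N) : slideDown p p = 1 := by
  ext i
  rw [slideDown_val]
  show slideFun _ _ _ = i.val
  unfold slideFun; split_ifs <;> omega

theorem slideDown_sign {N : ℕ} (p q : Fin N) (hpq : p.val ≤ q.val) :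
    Equiv.Perm.sign (slideDown p q) = (-1) ^ (q.val - p.val) := by
  obtain ⟨d, hd⟩ : ∃ d, q.val - p.val = d := ⟨_, rfl⟩
  induction d generalizing q with
  | zero =>
    have : p = q := Fin.ext (by omega)
    subst this
    rw [slideDown_self]
    simp [Nat.sub_self]
  | succ d ih =>
    set q' : Fin N := ⟨q.val - 1, by omega⟩ with hq'
    have hq'v : q'.val = q.val - 1 := rfl
    have hdec : slideDown p q = slideDown p q' * Equiv.swap q' q := by
      ext i
      rw [Perm.mul_apply]
      by_cases h1 : i = q'
      · subst h1
        rw [Equiv.swap_apply_left, slideDown_val, slideDown_val]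
        unfold slideFun; split_ifs <;> omega
      · by_cases h2 : i = q
        · subst h2
          rw [Equiv.swap_apply_right, slideDown_val, slideDown_val]
          unfold slideFun
          have h1v : i.val ≠ q'.val := fun h => h1 (Fin.ext h)
          split_ifs <;> omega
        · rw [Equiv.swap_apply_of_ne_of_ne h1 h2, slideDown_val, slideDown_val]
          unfold slideFun
          have h1v : i.val ≠ q'.val := fun h => h1 (Fin.ext h)
          have h2v : i.val ≠ q.val := fun h => h2 (Fin.ext h)
          split_ifs <;> omega
    rw [hdec, map_mul]
    have hne : q' ≠ q := by
      intro hh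
      rw [Fin.ext_iff] at hh
      omega
    rw [Equiv.Perm.sign_swap hne, ih q' (by omega) (by omega)]
    rw [show q.val - p.val = (q'.val - p.val) + 1 by omega, pow_succ]


theorem coset_eq_of_inl_image_eq {a b : ℕ} (σ₁ σ₂ : Perm (Fin a ⊕ Fin b))
    (h : Finset.image (fun i => σ₁ (Sum.inl i)) Finset.univ
       = Finset.image (fun i => σ₂ (Sum.inl i)) Finset.univ) :
    (Quotient.mk'' σ₁ : Perm.ModSumCongr (Fin a) (Fin b)) = Quotient.mk'' σ₂ := by
  rw [Quotient.eq'', QuotientGroup.leftRel_apply]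
  apply Equiv.Perm.mem_sumCongrHom_range_of_perm_mapsTo_inl
  rintro x ⟨i, rfl⟩
  have hmem : σ₂ (Sum.inl i) ∈ Finset.image (fun i => σ₁ (Sum.inl i)) Finset.univ := by
    rw [h]; exact Finset.mem_image_of_mem _ (Finset.mem_univ i)
  obtain ⟨i', -, hi'⟩ := Finset.mem_image.mp hmem
  exact ⟨i', by simp [Perm.mul_apply, ← hi']⟩

theorem coset_eq_of_inr_image_eq {a b : ℕ} (σ₁ σ₂ : Perm (Fin a ⊕ Fin b))
    (h : Finset.image (fun i => σ₁ (Sum.inr i)) Finset.univ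
       = Finset.image (fun i => σ₂ (Sum.inr i)) Finset.univ) :
    (Quotient.mk'' σ₁ : Perm.ModSumCongr (Fin a) (Fin b)) = Quotient.mk'' σ₂ := by
  rw [Quotient.eq'', QuotientGroup.leftRel_apply]
  apply Equiv.Perm.mem_sumCongrHom_range_of_perm_mapsTo_inl
  rw [Equiv.Perm.perm_mapsTo_inl_iff_mapsTo_inr]
  rintro x ⟨i, rfl⟩
  have hmem : σ₂ (Sum.inr i) ∈ Finset.image (fun i => σ₁ (Sum.inr i)) Finset.univ := by
    rw [h]; exact Finset.mem_image_of_mem _ (Finset.mem_univ i)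
  obtain ⟨i', -, hi'⟩ := Finset.mem_image.mp hmem
  exact ⟨i', by simp [Perm.mul_apply, ← hi']⟩

theorem inl_image_eq_of_coset_eq {a b : ℕ} (σ₁ σ₂ : Perm (Fin a ⊕ Fin b))
    (h : (Quotient.mk'' σ₁ : Perm.ModSumCongr (Fin a) (Fin b)) = Quotient.mk'' σ₂) :
    Finset.image (fun i => σ₁ (Sum.inl i)) Finset.univ
       = Finset.image (fun i => σ₂ (Sum.inl i)) Finset.univ := by
  rw [Quotient.eq'', QuotientGroup.leftRel_apply] at h
  obtain ⟨⟨sl, sr⟩, hs⟩ := h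
  have h2 : σ₂ = σ₁ * Equiv.Perm.sumCongrHom _ _ (sl, sr) := by
    rw [hs]; group
  ext z
  simp only [Finset.mem_image, Finset.mem_univ, true_and]
  constructor
  · rintro ⟨i, rfl⟩
    refine ⟨sl.symm i, ?_⟩
    rw [h2]
    simp [Perm.mul_apply, Equiv.Perm.sumCongrHom_apply]
  · rintro ⟨i, rfl⟩
    refine ⟨sl i, ?_⟩
    rw [h2]
    simp [Perm.mul_apply, Equiv.Perm.sumCongrHom_apply]

theorem inr_image_eq_of_coset_eq {a b : ℕ} (σ₁ σ₂ : Perm (Fin a ⊕ Fin b))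
    (h : (Quotient.mk'' σ₁ : Perm.ModSumCongr (Fin a) (Fin b)) = Quotient.mk'' σ₂) :
    Finset.image (fun i => σ₁ (Sum.inr i)) Finset.univ
       = Finset.image (fun i => σ₂ (Sum.inr i)) Finset.univ := by
  rw [Quotient.eq'', QuotientGroup.leftRel_apply] at h
  obtain ⟨⟨sl, sr⟩, hs⟩ := h
  have h2 : σ₂ = σ₁ * Equiv.Perm.sumCongrHom _ _ (sl, sr) := by
    rw [hs]; group
  ext z
  simp only [Finset.mem_image, Finset.mem_univ, true_and]
  constructor
  · rintro ⟨i, rfl⟩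
    refine ⟨sr.symm i, ?_⟩
    rw [h2]
    simp [Perm.mul_apply, Equiv.Perm.sumCongrHom_apply]
  · rintro ⟨i, rfl⟩
    refine ⟨sr i, ?_⟩
    rw [h2]
    simp [Perm.mul_apply, Equiv.Perm.sumCongrHom_apply]

def Tfam {j : ℕ} (E F : Fin j → V) : Fin (2 * j) → V :=
  fun i => if h : (i : ℕ) < j then E ⟨i, h⟩
    else F ⟨(i : ℕ) - j, by have := i.isLt; omega⟩

noncomputable def cval : ℕ → ℝ
  | 0 => 1
  | (j + 1) => ((j : ℝ) + 1) * ((-1) ^ j * cval j)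

theorem cval_succ (j : ℕ) : cval (j + 1) = ((j : ℝ) + 1) * ((-1) ^ j * cval j) := rfl

theorem cval_ne_zero : ∀ j, cval j ≠ 0
  | 0 => one_ne_zero
  | (j + 1) => by
    rw [cval_succ]
    exact mul_ne_zero (by positivity)
      (mul_ne_zero (pow_ne_zero _ (by norm_num)) (cval_ne_zero j))

theorem slideDown_sign' {N : ℕ} (p q : ℕ) (hp : p < N) (hq : q < N) (hpq : p ≤ q) :
    Equiv.Perm.sign (slideDown (⟨p, hp⟩ : Fin N) ⟨q, hq⟩) = (-1) ^ (q - p) :=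
  slideDown_sign _ _ hpq

def repPerm (j : ℕ) (a : Fin (j + 1)) : Perm (Fin (2 * j + 2)) :=
  slideDown ⟨j + 1 + a.val, by have := a.isLt; omega⟩ ⟨2 * j + 1, by omega⟩ *
    slideDown ⟨a.val, by have := a.isLt; omega⟩ ⟨2 * j, by omega⟩

theorem repPerm_val (j : ℕ) (a : Fin (j + 1)) (i : Fin (2 * j + 2)) :
    (repPerm j a i).val =
      if i.val = 2 * j then a.val
      else if i.val = 2 * j + 1 then j + 1 + a.val
      else if i.val < a.val then i.val
      else if i.val < j + a.val then i.val + 1 else i.val + 2 := by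
  have ha := a.isLt
  have hi := i.isLt
  show slideFun (j + 1 + a.val) (2 * j + 1) (slideFun a.val (2 * j) i.val) = _
  unfold slideFun
  split_ifs <;> omega

theorem repPerm_val' (j : ℕ) (a : Fin (j + 1)) (iv : ℕ) (h : iv < 2 * j + 2) :
    (repPerm j a ⟨iv, h⟩).val =
      if iv = 2 * j then a.val
      else if iv = 2 * j + 1 then j + 1 + a.val
      else if iv < a.val then iv
      else if iv < j + a.val then iv + 1 else iv + 2 :=
  repPerm_val j a ⟨iv, h⟩

theorem repPerm_sign (j : ℕ) (a : Fin (j + 1)) :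
    Perm.sign (repPerm j a) = (-1) ^ j := by
  have ha := a.isLt
  unfold repPerm
  rw [map_mul, slideDown_sign' (j + 1 + a.val) (2 * j + 1) (by omega) (by omega) (by omega),
    slideDown_sign' a.val (2 * j) (by omega) (by omega) (by omega)]
  rw [← pow_add,
    show (2 * j + 1 - (j + 1 + a.val)) + (2 * j - a.val) = j + 2 * (j - a.val) by omega,
    pow_add, pow_mul]
  norm_num

noncomputable def repς (j : ℕ) (a : Fin (j + 1)) : Perm (Fin (2 * j) ⊕ Fin 2) :=
  (Equiv.permCongr (finSumFinEquiv (m := 2 * j) (n := 2)).symm) (repPerm j a)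

theorem repς_apply (j : ℕ) (a : Fin (j + 1)) (s : Fin (2 * j) ⊕ Fin 2) :
    repς j a s = finSumFinEquiv.symm (repPerm j a (finSumFinEquiv s)) := by
  unfold repς
  rw [Equiv.permCongr_apply]
  simp

theorem repς_sign (j : ℕ) (a : Fin (j + 1)) :
    Perm.sign (repς j a) = (-1) ^ j := by
  unfold repς
  rw [Equiv.Perm.sign_permCongr, repPerm_sign]

theorem sign_smul_real (j : ℕ) (r : ℝ) : ((-1 : ℤˣ) ^ j) • r = (-1 : ℝ) ^ j * r := by
  rw [Units.smul_def, ← Int.cast_smul_eq_zsmul ℝ, smul_eq_mul]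
  push_cast
  ring

theorem image_fin2 {β : Type*} [DecidableEq β] (f : Fin 2 → β) :
    Finset.image f Finset.univ = {f 0, f 1} := by
  ext z
  simp only [Finset.mem_image, Finset.mem_univ, true_and, Finset.mem_insert,
    Finset.mem_singleton]
  constructor
  · rintro ⟨i, rfl⟩; fin_cases i <;> simp
  · rintro (rfl | rfl)
    exacts [⟨0, rfl⟩, ⟨1, rfl⟩]

theorem ωpow_fam : ∀ (j : ℕ) (E F : Fin j → V),
    (∀ a b, ω ![E a, F b] = if a = b then 1 else 0) →
    (∀ a b, ω ![E a, E b] = 0) →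
    (∀ a b, ω ![F a, F b] = 0) →
    ωpow ω j (Tfam E F) = cval j := by
  intro j
  induction j with
  | zero =>
    intro E F _ _ _
    show (AlternatingMap.constOfIsEmpty ℝ V (Fin 0) 1) (Tfam E F) = cval 0
    simp [cval]
  | succ j ih =>
    intro E F hEF hEE hFF
    classical
    rw [ωpow_succ_apply, wedge_apply]
    set y : Fin (2 * j) ⊕ Fin 2 → V :=
      (Tfam E F ∘ finCongr (by ring : 2 * j + 2 = 2 * (j + 1))) ∘ finSumFinEquiv with hydef
    set x' : Fin (2 * j + 2) → V :=
      Tfam E F ∘ finCongr (by ring : 2 * j + 2 = 2 * (j + 1)) with hx'def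
    have hyx : ∀ s, y s = x' (finSumFinEquiv s) := fun s => rfl
    have hx'E : ∀ (p : Fin (2 * j + 2)) (hp : p.val < j + 1), x' p = E ⟨p.val, hp⟩ := by
      intro p hp
      show Tfam E F (finCongr _ p) = _
      unfold Tfam
      rw [dif_pos (show ((finCongr (by ring : 2 * j + 2 = 2 * (j + 1)) p
        : Fin (2 * (j + 1))) : ℕ) < j + 1 from hp)]
      exact congrArg E (Fin.ext rfl)
    have hx'F : ∀ (p : Fin (2 * j + 2)) (hp : j + 1 ≤ p.val),
        x' p = F ⟨p.val - (j + 1), by have := p.isLt; omega⟩ := by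
      intro p hp
      show Tfam E F (finCongr _ p) = _
      unfold Tfam
      rw [dif_neg (show ¬((finCongr (by ring : 2 * j + 2 = 2 * (j + 1)) p
        : Fin (2 * (j + 1))) : ℕ) < j + 1
        from fun hc => absurd (show p.val < j + 1 from hc) (by omega))]
      exact congrArg F (Fin.ext rfl)
    have homega : ∀ p p' : Fin (2 * j + 2), ω ![x' p, x' p'] ≠ 0 →
        (p'.val = j + 1 + p.val ∨ p.val = j + 1 + p'.val) := by
      intro p p' hne
      by_contra hcon
      push_neg at hcon
      apply hne
      have hp := p.isLt
      have hp' := p'.isLt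
      by_cases h1 : p.val < j + 1 <;> by_cases h2 : p'.val < j + 1
      · rw [hx'E p h1, hx'E p' h2]; exact hEE _ _
      · rw [hx'E p h1, hx'F p' (by omega), hEF, if_neg]
        intro hq
        rw [Fin.ext_iff] at hq
        have hq2 : p.val = p'.val - (j + 1) := hq
        omega
      · rw [hx'F p (by omega), hx'E p' h2, form_antisymm, hEF]
        rw [if_neg, neg_zero]
        intro hq
        rw [Fin.ext_iff] at hq
        have hq2 : p'.val = p.val - (j + 1) := hq
        omega
      · rw [hx'F p (by omega), hx'F p' (by omega)]; exact hFF _ _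
    set s : Finset (Perm.ModSumCongr (Fin (2 * j)) (Fin 2)) :=
      Finset.image (fun a : Fin (j + 1) => (Quotient.mk'' (repς j a))) Finset.univ with hsdef
    have hrep0 : ∀ a : Fin (j + 1), repς j a (Sum.inr 0)
        = finSumFinEquiv.symm ⟨a.val, by have := a.isLt; omega⟩ := by
      intro a
      rw [repς_apply]
      congr 1
      apply Fin.ext
      rw [repPerm_val]
      have h1 : (finSumFinEquiv (Sum.inr 0 : Fin (2 * j) ⊕ Fin 2)).val = 2 * j := by simp
      rw [h1]
      simp
    have hrep1 : ∀ a : Fin (j + 1), repς j a (Sum.inr 1)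
        = finSumFinEquiv.symm ⟨j + 1 + a.val, by have := a.isLt; omega⟩ := by
      intro a
      rw [repς_apply]
      congr 1
      apply Fin.ext
      rw [repPerm_val]
      have h1 : (finSumFinEquiv (Sum.inr 1 : Fin (2 * j) ⊕ Fin 2)).val = 2 * j + 1 := by simp
      rw [h1]
      simp
    have hvan : ∀ q ∈ (Finset.univ : Finset (Perm.ModSumCongr (Fin (2 * j)) (Fin 2))),
        q ∉ s →
        TensorProduct.lid ℝ ℝ (AlternatingMap.domCoprod.summand (ωpow ω j) ω q y) = 0 := by
      intro q _ hq
      induction q using Quotient.inductionOn' with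
      | h σ =>
      by_contra hne0
      have hg : ω (fun r => y (σ (Sum.inr r))) ≠ 0 := by
        intro h0
        exact hne0 (by rw [summand_eval, h0, mul_zero, smul_zero])
      have hg2 : ω ![x' (finSumFinEquiv (σ (Sum.inr 0))),
          x' (finSumFinEquiv (σ (Sum.inr 1)))] ≠ 0 := by
        intro h0
        apply hg
        rw [pair_eq (fun r => y (σ (Sum.inr r)))]
        exact h0
      have hcases := homega _ _ hg2
      apply hq
      rw [hsdef]
      have key : ∃ a : Fin (j + 1),
          (Quotient.mk'' σ : Perm.ModSumCongr (Fin (2 * j)) (Fin 2))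
            = Quotient.mk'' (repς j a) := by
        rcases hcases with hc | hc
        · have hlt : (finSumFinEquiv (σ (Sum.inr 0))).val < j + 1 := by
            have := (finSumFinEquiv (σ (Sum.inr 1))).isLt; omega
          refine ⟨⟨(finSumFinEquiv (σ (Sum.inr 0))).val, hlt⟩, ?_⟩
          apply coset_eq_of_inr_image_eq
          rw [image_fin2, image_fin2, hrep0, hrep1]
          have e0 : σ (Sum.inr 0)
              = finSumFinEquiv.symm ⟨(finSumFinEquiv (σ (Sum.inr 0))).val, by omega⟩ := by
            rw [show (⟨(finSumFinEquiv (σ (Sum.inr 0))).val, by omega⟩ : Fin (2 * j + 2))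
              = finSumFinEquiv (σ (Sum.inr 0)) from Fin.ext rfl]
            rw [Equiv.symm_apply_apply]
          have e1 : σ (Sum.inr 1)
              = finSumFinEquiv.symm ⟨j + 1 + (finSumFinEquiv (σ (Sum.inr 0))).val, by
                have := (finSumFinEquiv (σ (Sum.inr 1))).isLt; omega⟩ := by
            rw [show (⟨j + 1 + (finSumFinEquiv (σ (Sum.inr 0))).val, by
                have := (finSumFinEquiv (σ (Sum.inr 1))).isLt; omega⟩ : Fin (2 * j + 2))
              = finSumFinEquiv (σ (Sum.inr 1)) from Fin.ext hc.symm]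
            rw [Equiv.symm_apply_apply]
          rw [← e0, ← e1]
        · have hlt : (finSumFinEquiv (σ (Sum.inr 1))).val < j + 1 := by
            have := (finSumFinEquiv (σ (Sum.inr 0))).isLt; omega
          refine ⟨⟨(finSumFinEquiv (σ (Sum.inr 1))).val, hlt⟩, ?_⟩
          apply coset_eq_of_inr_image_eq
          rw [image_fin2, image_fin2, hrep0, hrep1]
          have e0 : σ (Sum.inr 1)
              = finSumFinEquiv.symm ⟨(finSumFinEquiv (σ (Sum.inr 1))).val, by omega⟩ := by
            rw [show (⟨(finSumFinEquiv (σ (Sum.inr 1))).val, by omega⟩ : Fin (2 * j + 2))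
              = finSumFinEquiv (σ (Sum.inr 1)) from Fin.ext rfl]
            rw [Equiv.symm_apply_apply]
          have e1 : σ (Sum.inr 0)
              = finSumFinEquiv.symm ⟨j + 1 + (finSumFinEquiv (σ (Sum.inr 1))).val, by
                have := (finSumFinEquiv (σ (Sum.inr 0))).isLt; omega⟩ := by
            rw [show (⟨j + 1 + (finSumFinEquiv (σ (Sum.inr 1))).val, by
                have := (finSumFinEquiv (σ (Sum.inr 0))).isLt; omega⟩ : Fin (2 * j + 2))
              = finSumFinEquiv (σ (Sum.inr 0)) from Fin.ext hc.symm]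
            rw [Equiv.symm_apply_apply]
          rw [← e0, ← e1, Finset.pair_comm]
      obtain ⟨a, ha⟩ := key
      rw [ha]
      exact Finset.mem_image_of_mem _ (Finset.mem_univ a)
    rw [← Finset.sum_subset (Finset.subset_univ s) hvan]
    rw [hsdef]
    have hinj : ∀ a ∈ (Finset.univ : Finset (Fin (j + 1))), ∀ b ∈ Finset.univ,
        (Quotient.mk'' (repς j a) : Perm.ModSumCongr (Fin (2 * j)) (Fin 2))
          = Quotient.mk'' (repς j b) → a = b := by
      intro a _ b _ hab
      have h2 := inr_image_eq_of_coset_eq _ _ hab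
      rw [image_fin2, image_fin2, hrep0, hrep1, hrep0, hrep1] at h2
      have h3 : finSumFinEquiv.symm (⟨a.val, by have := a.isLt; omega⟩ : Fin (2 * j + 2))
          ∈ ({finSumFinEquiv.symm (⟨b.val, by have := b.isLt; omega⟩ : Fin (2 * j + 2)),
              finSumFinEquiv.symm ⟨j + 1 + b.val, by have := b.isLt; omega⟩} : Finset _) := by
        rw [← h2]
        exact Finset.mem_insert_self _ _
      rw [Finset.mem_insert, Finset.mem_singleton] at h3
      have ha := a.isLt
      have hb := b.isLt
      rcases h3 with h3 | h3
      · have h4 := finSumFinEquiv.symm.injective h3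
        have h5 := congrArg Fin.val h4
        exact Fin.ext h5
      · have h4 := finSumFinEquiv.symm.injective h3
        have h5 := congrArg Fin.val h4
        exact absurd (show a.val = j + 1 + b.val from h5) (by omega)
    refine Eq.trans (Finset.sum_image hinj) ?_
    have hterm : ∀ a : Fin (j + 1),
        TensorProduct.lid ℝ ℝ
          (AlternatingMap.domCoprod.summand (ωpow ω j) ω (Quotient.mk'' (repς j a)) y)
        = (-1 : ℝ) ^ j * cval j := by
      intro a
      rw [summand_eval, repς_sign, sign_smul_real]
      have ha := a.isLt
      have hgfac : ω (fun r => y (repς j a (Sum.inr r))) = 1 := by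
        have h0 : y (repς j a (Sum.inr 0)) = E a := by
          rw [hrep0, hyx, Equiv.apply_symm_apply, hx'E _ (show a.val < j + 1 from ha)]
        have h1 : y (repς j a (Sum.inr 1)) = F a := by
          rw [hrep1, hyx, Equiv.apply_symm_apply,
            hx'F _ (show j + 1 ≤ j + 1 + a.val from by omega)]
          exact congrArg F (Fin.ext (show j + 1 + a.val - (j + 1) = a.val by omega))
        rw [pair_eq (fun r => y (repς j a (Sum.inr r)))]
        show ω ![y (repς j a (Sum.inr 0)), y (repς j a (Sum.inr 1))] = 1
        rw [h0, h1, hEF, if_pos rfl]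
      set E' : Fin j → V := fun t =>
        E ⟨if t.val < a.val then t.val else t.val + 1, by have := t.isLt; split_ifs <;> omega⟩
        with hE'def
      set F' : Fin j → V := fun t =>
        F ⟨if t.val < a.val then t.val else t.val + 1, by have := t.isLt; split_ifs <;> omega⟩
        with hF'def
      have hffac : (fun i => y (repς j a (Sum.inl i))) = Tfam E' F' := by
        funext i
        have hi := i.isLt
        have hy1 : y (repς j a (Sum.inl i))
            = x' (repPerm j a ⟨i.val, by omega⟩) := by
          rw [repς_apply, hyx, Equiv.apply_symm_apply]
          exact congrArg (fun z => x' (repPerm j a z)) (Fin.ext (by simp))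
        rw [hy1]
        have hpv := repPerm_val' j a i.val (by omega)
        set p : Fin (2 * j + 2) := repPerm j a ⟨i.val, by omega⟩ with hpdef
        show x' p = Tfam E' F' i
        unfold Tfam
        by_cases h1 : i.val < j
        · rw [dif_pos h1, hE'def]
          by_cases h2 : i.val < a.val
          · have hp1 : p.val = i.val := by rw [hpv]; split_ifs <;> omega
            rw [hx'E p (by omega)]
            exact congrArg E (Fin.ext
              (show p.val = if i.val < a.val then i.val else i.val + 1 from by
                rw [if_pos h2]; exact hp1))
          · have hp1 : p.val = i.val + 1 := by rw [hpv]; split_ifs <;> omega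
            rw [hx'E p (by omega)]
            exact congrArg E (Fin.ext
              (show p.val = if i.val < a.val then i.val else i.val + 1 from by
                rw [if_neg h2]; exact hp1))
        · rw [dif_neg h1, hF'def]
          by_cases h2 : i.val < j + a.val
          · have hp1 : p.val = i.val + 1 := by rw [hpv]; split_ifs <;> omega
            rw [hx'F p (by omega)]
            exact congrArg F (Fin.ext
              (show p.val - (j + 1)
                  = if i.val - j < a.val then i.val - j else i.val - j + 1 from by
                rw [if_pos (by omega)]; omega))
          · have hp1 : p.val = i.val + 2 := by rw [hpv]; split_ifs <;> omega
            rw [hx'F p (by omega)]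
            exact congrArg F (Fin.ext
              (show p.val - (j + 1)
                  = if i.val - j < a.val then i.val - j else i.val - j + 1 from by
                rw [if_neg (by omega)]; omega))
      have hE'F' : ∀ t s', ω ![E' t, F' s'] = if t = s' then 1 else 0 := by
        intro t s'
        rw [hE'def, hF'def]
        show ω ![E _, F _] = _
        rw [hEF]
        by_cases hts : t = s'
        · subst hts
          rw [if_pos rfl, if_pos rfl]
        · rw [if_neg hts, if_neg]
          intro hq
          rw [Fin.ext_iff] at hq
          have hq2 : (if t.val < a.val then t.val else t.val + 1)
              = (if s'.val < a.val then s'.val else s'.val + 1) := hq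
          apply hts
          apply Fin.ext
          split_ifs at hq2 <;> omega
      have hE'E' : ∀ t s', ω ![E' t, E' s'] = 0 := fun t s' => hEE _ _
      have hF'F' : ∀ t s', ω ![F' t, F' s'] = 0 := fun t s' => hFF _ _
      rw [hffac, hgfac, ih E' F' hE'F' hE'E' hF'F', mul_one]
    rw [Finset.sum_congr rfl (fun a _ => hterm a), Finset.sum_const, Finset.card_univ,
      Fintype.card_fin, cval_succ]
    rw [nsmul_eq_mul]
    push_cast
    ring

theorem wedge_eval_uv (k : ℕ) (α : V [⋀^Fin 2]→ₗ[ℝ] ℝ) (u v : V) (E F : Fin k → V)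
    (huv : ω ![u, v] = 0)
    (hEF : ∀ a b, ω ![E a, F b] = if a = b then 1 else 0)
    (hEE : ∀ a b, ω ![E a, E b] = 0)
    (hFF : ∀ a b, ω ![F a, F b] = 0)
    (huE : ∀ a, ω ![u, E a] = 0) (huF : ∀ a, ω ![u, F a] = 0)
    (hvE : ∀ a, ω ![v, E a] = 0) (hvF : ∀ a, ω ![v, F a] = 0) :
    wedge α (ωpow ω k) (Fin.append ![u, v] (Tfam E F)) = α ![u, v] * cval k := by
  classical
  rw [wedge_apply]
  set y : Fin 2 ⊕ Fin (2 * k) → V := Fin.append ![u, v] (Tfam E F) ∘ finSumFinEquiv with hydef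
  have hyl : ∀ i : Fin 2, y (Sum.inl i) = ![u, v] i := by
    intro i
    show Fin.append ![u, v] (Tfam E F) (finSumFinEquiv (Sum.inl i)) = _
    rw [finSumFinEquiv_apply_left, Fin.append_left]
  have hyr : ∀ r : Fin (2 * k), y (Sum.inr r) = Tfam E F r := by
    intro r
    show Fin.append ![u, v] (Tfam E F) (finSumFinEquiv (Sum.inr r)) = _
    rw [finSumFinEquiv_apply_right, Fin.append_right]
  have horth : ∀ (w : V), (w = u ∨ w = v) → ∀ s, ω ![w, y s] = 0 := by
    intro w hw s
    have hvals : y s = u ∨ y s = v ∨ (∃ a, y s = E a) ∨ (∃ a, y s = F a) := by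
      rcases s with i | r
      · rw [hyl]; fin_cases i
        · exact Or.inl rfl
        · exact Or.inr (Or.inl rfl)
      · rw [hyr]
        unfold Tfam
        split_ifs with h
        · exact Or.inr (Or.inr (Or.inl ⟨_, rfl⟩))
        · exact Or.inr (Or.inr (Or.inr ⟨_, rfl⟩))
    have hvu : ω ![v, u] = 0 := by rw [form_antisymm, huv, neg_zero]
    rcases hw with rfl | rfl <;>
      rcases hvals with h | h | ⟨a, h⟩ | ⟨a, h⟩ <;> rw [h]
    · exact form_self ω w
    · exact huv
    · exact huE a
    · exact huF a
    · exact hvu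
    · exact form_self ω w
    · exact hvE a
    · exact hvF a
  have h0 : ∀ q ∈ (Finset.univ : Finset (Perm.ModSumCongr (Fin 2) (Fin (2 * k)))),
      q ∉ ({Quotient.mk'' (1 : Perm (Fin 2 ⊕ Fin (2 * k)))}
        : Finset (Perm.ModSumCongr (Fin 2) (Fin (2 * k)))) →
      TensorProduct.lid ℝ ℝ (AlternatingMap.domCoprod.summand α (ωpow ω k) q y) = 0 := by
    intro q _ hq'
    rw [Finset.mem_singleton] at hq'
    revert hq'
    induction q using Quotient.inductionOn' with
    | h σ =>
    intro hq
    by_cases hcase : ∀ r, ∃ r', σ (Sum.inr r) = Sum.inr r'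
    · exfalso
      apply hq
      rw [Quotient.eq'', QuotientGroup.leftRel_apply]
      have hmem : σ ∈ (Perm.sumCongrHom (Fin 2) (Fin (2 * k))).range := by
        apply Equiv.Perm.mem_sumCongrHom_range_of_perm_mapsTo_inl
        rw [Equiv.Perm.perm_mapsTo_inl_iff_mapsTo_inr]
        rintro x ⟨r, rfl⟩
        obtain ⟨r', hr'⟩ := hcase r
        exact ⟨r', hr'.symm⟩
      rw [mul_one]
      exact inv_mem hmem
    · push_neg at hcase
      obtain ⟨r, hr⟩ := hcase
      rcases hsr : σ (Sum.inr r) with i | r'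
      swap
      · exact absurd hsr (hr r')
      have hz : ωpow ω k (fun r'' => y (σ (Sum.inr r''))) = 0 := by
        apply ωpow_eq_zero ω k _ r
        intro r''
        show ω ![y (σ (Sum.inr r)), y (σ (Sum.inr r''))] = 0
        rw [hsr, hyl]
        apply horth
        fin_cases i
        · exact Or.inl rfl
        · exact Or.inr rfl
      rw [summand_eval, hz, mul_zero, smul_zero]

  refine Eq.trans (Finset.sum_subset (Finset.subset_univ _) h0).symm ?_
  rw [Finset.sum_singleton]
  rw [summand_eval]
  have hf : (fun i => y ((1 : Perm (Fin 2 ⊕ Fin (2 * k))) (Sum.inl i))) = ![u, v] := by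
    funext i; rw [Perm.one_apply, hyl]
  have hg : (fun r => y ((1 : Perm (Fin 2 ⊕ Fin (2 * k))) (Sum.inr r))) = Tfam E F := by
    funext r; rw [Perm.one_apply, hyr]
  rw [hf, hg, ωpow_fam ω k E F hEF hEE hFF, map_one, one_smul]

def repφ (k : ℕ) (a : Fin (k + 1)) : Perm (Fin (2 + 2 * k)) :=
  (slideDown ⟨0, by omega⟩ ⟨a.val, by have := a.isLt; omega⟩)⁻¹ *
    (slideDown ⟨1, by omega⟩ ⟨k + 1 + a.val, by have := a.isLt; omega⟩)⁻¹

theorem slideDown_inv_val {N : ℕ} (p q i : Fin N) :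
    ((slideDown p q)⁻¹ i).val = slideInv p.val q.val i.val := rfl

theorem repφ_val (k : ℕ) (a : Fin (k + 1)) (iv : ℕ) (h : iv < 2 + 2 * k) :
    (repφ k a ⟨iv, h⟩).val =
      if iv = 0 then a.val
      else if iv = 1 then k + 1 + a.val
      else if iv ≤ a.val + 1 then iv - 2
      else if iv ≤ k + 1 + a.val then iv - 1 else iv := by
  have ha := a.isLt
  show slideInv 0 a.val (slideInv 1 (k + 1 + a.val) iv) = _
  unfold slideInv
  split_ifs <;> omega

theorem repφ_sign (k : ℕ) (a : Fin (k + 1)) :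
    Perm.sign (repφ k a) = (-1) ^ k := by
  have ha := a.isLt
  unfold repφ
  rw [map_mul, Equiv.Perm.sign_inv, Equiv.Perm.sign_inv,
    slideDown_sign' 0 a.val (by omega) (by omega) (by omega),
    slideDown_sign' 1 (k + 1 + a.val) (by omega) (by omega) (by omega)]
  rw [← pow_add, show (a.val - 0) + (k + 1 + a.val - 1) = k + 2 * a.val by omega,
    pow_add, pow_mul]
  norm_num

noncomputable def repρ (k : ℕ) (a : Fin (k + 1)) : Perm (Fin 2 ⊕ Fin (2 * k)) :=
  (Equiv.permCongr (finSumFinEquiv (m := 2) (n := 2 * k)).symm) (repφ k a)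

theorem repρ_apply (k : ℕ) (a : Fin (k + 1)) (s : Fin 2 ⊕ Fin (2 * k)) :
    repρ k a s = finSumFinEquiv.symm (repφ k a (finSumFinEquiv s)) := by
  unfold repρ
  rw [Equiv.permCongr_apply]
  simp

theorem repρ_sign (k : ℕ) (a : Fin (k + 1)) :
    Perm.sign (repρ k a) = (-1) ^ k := by
  unfold repρ
  rw [Equiv.Perm.sign_permCongr, repφ_sign]

theorem wedge_eval_diag (k : ℕ) (c : ℝ) (α : V [⋀^Fin 2]→ₗ[ℝ] ℝ)
    (hα : ∀ x y : V, α ![x, y] = c * ω ![x, y])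
    (E F : Fin (k + 1) → V)
    (hEF : ∀ a b, ω ![E a, F b] = if a = b then 1 else 0)
    (hEE : ∀ a b, ω ![E a, E b] = 0)
    (hFF : ∀ a b, ω ![F a, F b] = 0) :
    wedge α (ωpow ω k) (Tfam E F ∘ finCongr (by ring : 2 + 2 * k = 2 * (k + 1)))
      = ((k : ℝ) + 1) * ((-1) ^ k * (c * cval k)) := by
  classical
  rw [wedge_apply]
  set y : Fin 2 ⊕ Fin (2 * k) → V :=
    (Tfam E F ∘ finCongr (by ring : 2 + 2 * k = 2 * (k + 1))) ∘ finSumFinEquiv with hydef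
  set x' : Fin (2 + 2 * k) → V :=
    Tfam E F ∘ finCongr (by ring : 2 + 2 * k = 2 * (k + 1)) with hx'def
  have hyx : ∀ s, y s = x' (finSumFinEquiv s) := fun s => rfl
  have hx'E : ∀ (p : Fin (2 + 2 * k)) (hp : p.val < k + 1), x' p = E ⟨p.val, hp⟩ := by
    intro p hp
    show Tfam E F (finCongr _ p) = _
    unfold Tfam
    rw [dif_pos (show ((finCongr (by ring : 2 + 2 * k = 2 * (k + 1)) p
      : Fin (2 * (k + 1))) : ℕ) < k + 1 from hp)]
    exact congrArg E (Fin.ext rfl)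
  have hx'F : ∀ (p : Fin (2 + 2 * k)) (hp : k + 1 ≤ p.val),
      x' p = F ⟨p.val - (k + 1), by have := p.isLt; omega⟩ := by
    intro p hp
    show Tfam E F (finCongr _ p) = _
    unfold Tfam
    rw [dif_neg (show ¬((finCongr (by ring : 2 + 2 * k = 2 * (k + 1)) p
      : Fin (2 * (k + 1))) : ℕ) < k + 1
      from fun hc => absurd (show p.val < k + 1 from hc) (by omega))]
    exact congrArg F (Fin.ext rfl)
  have homega : ∀ p p' : Fin (2 + 2 * k), ω ![x' p, x' p'] ≠ 0 →
      (p'.val = k + 1 + p.val ∨ p.val = k + 1 + p'.val) := by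
    intro p p' hne
    by_contra hcon
    push_neg at hcon
    apply hne
    have hp := p.isLt
    have hp' := p'.isLt
    by_cases h1 : p.val < k + 1 <;> by_cases h2 : p'.val < k + 1
    · rw [hx'E p h1, hx'E p' h2]; exact hEE _ _
    · rw [hx'E p h1, hx'F p' (by omega), hEF, if_neg]
      intro hq
      rw [Fin.ext_iff] at hq
      have hq2 : p.val = p'.val - (k + 1) := hq
      omega
    · rw [hx'F p (by omega), hx'E p' h2, form_antisymm, hEF]
      rw [if_neg, neg_zero]
      intro hq
      rw [Fin.ext_iff] at hq
      have hq2 : p'.val = p.val - (k + 1) := hq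
      omega
    · rw [hx'F p (by omega), hx'F p' (by omega)]; exact hFF _ _
  set s : Finset (Perm.ModSumCongr (Fin 2) (Fin (2 * k))) :=
    Finset.image (fun a : Fin (k + 1) => (Quotient.mk'' (repρ k a))) Finset.univ with hsdef
  have hrep0 : ∀ a : Fin (k + 1), repρ k a (Sum.inl 0)
      = finSumFinEquiv.symm ⟨a.val, by have := a.isLt; omega⟩ := by
    intro a
    rw [repρ_apply]
    congr 1
  have hrep1 : ∀ a : Fin (k + 1), repρ k a (Sum.inl 1)
      = finSumFinEquiv.symm ⟨k + 1 + a.val, by have := a.isLt; omega⟩ := by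
    intro a
    rw [repρ_apply]
    congr 1
    apply Fin.ext
    have h1 : (finSumFinEquiv (Sum.inl 1 : Fin 2 ⊕ Fin (2 * k))) = ⟨1, by omega⟩ := by
      apply Fin.ext; simp
    rw [h1, repφ_val]
    simp
  have hvan : ∀ q ∈ (Finset.univ : Finset (Perm.ModSumCongr (Fin 2) (Fin (2 * k)))),
      q ∉ s →
      TensorProduct.lid ℝ ℝ (AlternatingMap.domCoprod.summand α (ωpow ω k) q y) = 0 := by
    intro q _ hq
    induction q using Quotient.inductionOn' with
    | h σ =>
    by_contra hne0
    have hg : α (fun i => y (σ (Sum.inl i))) ≠ 0 := by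
      intro h0
      exact hne0 (by rw [summand_eval, h0, zero_mul, smul_zero])
    have hg2 : ω ![x' (finSumFinEquiv (σ (Sum.inl 0))),
        x' (finSumFinEquiv (σ (Sum.inl 1)))] ≠ 0 := by
      intro h0
      apply hg
      rw [pair_eq (fun i => y (σ (Sum.inl i)))]
      show α ![y (σ (Sum.inl 0)), y (σ (Sum.inl 1))] = 0
      rw [hyx, hyx, hα, h0, mul_zero]
    have hcases := homega _ _ hg2
    apply hq
    rw [hsdef]
    have key : ∃ a : Fin (k + 1),
        (Quotient.mk'' σ : Perm.ModSumCongr (Fin 2) (Fin (2 * k)))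
          = Quotient.mk'' (repρ k a) := by
      rcases hcases with hc | hc
      · have hlt : (finSumFinEquiv (σ (Sum.inl 0))).val < k + 1 := by
          have := (finSumFinEquiv (σ (Sum.inl 1))).isLt; omega
        refine ⟨⟨(finSumFinEquiv (σ (Sum.inl 0))).val, hlt⟩, ?_⟩
        apply coset_eq_of_inl_image_eq
        rw [image_fin2, image_fin2, hrep0, hrep1]
        have e0 : σ (Sum.inl 0)
            = finSumFinEquiv.symm ⟨(finSumFinEquiv (σ (Sum.inl 0))).val, by omega⟩ := by
          rw [show (⟨(finSumFinEquiv (σ (Sum.inl 0))).val, by omega⟩ : Fin (2 + 2 * k))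
            = finSumFinEquiv (σ (Sum.inl 0)) from Fin.ext rfl]
          rw [Equiv.symm_apply_apply]
        have e1 : σ (Sum.inl 1)
            = finSumFinEquiv.symm ⟨k + 1 + (finSumFinEquiv (σ (Sum.inl 0))).val, by
              have := (finSumFinEquiv (σ (Sum.inl 1))).isLt; omega⟩ := by
          rw [show (⟨k + 1 + (finSumFinEquiv (σ (Sum.inl 0))).val, by
              have := (finSumFinEquiv (σ (Sum.inl 1))).isLt; omega⟩ : Fin (2 + 2 * k))
            = finSumFinEquiv (σ (Sum.inl 1)) from Fin.ext hc.symm]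
          rw [Equiv.symm_apply_apply]
        rw [← e0, ← e1]
      · have hlt : (finSumFinEquiv (σ (Sum.inl 1))).val < k + 1 := by
          have := (finSumFinEquiv (σ (Sum.inl 0))).isLt; omega
        refine ⟨⟨(finSumFinEquiv (σ (Sum.inl 1))).val, hlt⟩, ?_⟩
        apply coset_eq_of_inl_image_eq
        rw [image_fin2, image_fin2, hrep0, hrep1]
        have e0 : σ (Sum.inl 1)
            = finSumFinEquiv.symm ⟨(finSumFinEquiv (σ (Sum.inl 1))).val, by omega⟩ := by
          rw [show (⟨(finSumFinEquiv (σ (Sum.inl 1))).val, by omega⟩ : Fin (2 + 2 * k))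
            = finSumFinEquiv (σ (Sum.inl 1)) from Fin.ext rfl]
          rw [Equiv.symm_apply_apply]
        have e1 : σ (Sum.inl 0)
            = finSumFinEquiv.symm ⟨k + 1 + (finSumFinEquiv (σ (Sum.inl 1))).val, by
              have := (finSumFinEquiv (σ (Sum.inl 0))).isLt; omega⟩ := by
          rw [show (⟨k + 1 + (finSumFinEquiv (σ (Sum.inl 1))).val, by
              have := (finSumFinEquiv (σ (Sum.inl 0))).isLt; omega⟩ : Fin (2 + 2 * k))
            = finSumFinEquiv (σ (Sum.inl 0)) from Fin.ext hc.symm]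
          rw [Equiv.symm_apply_apply]
        rw [← e0, ← e1, Finset.pair_comm]
    obtain ⟨a, ha⟩ := key
    rw [ha]
    exact Finset.mem_image_of_mem _ (Finset.mem_univ a)
  rw [← Finset.sum_subset (Finset.subset_univ s) hvan]
  rw [hsdef]
  have hinj : ∀ a ∈ (Finset.univ : Finset (Fin (k + 1))), ∀ b ∈ Finset.univ,
      (Quotient.mk'' (repρ k a) : Perm.ModSumCongr (Fin 2) (Fin (2 * k)))
        = Quotient.mk'' (repρ k b) → a = b := by
    intro a _ b _ hab
    have h2 := inl_image_eq_of_coset_eq _ _ hab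
    rw [image_fin2, image_fin2, hrep0, hrep1, hrep0, hrep1] at h2
    have h3 : finSumFinEquiv.symm (⟨a.val, by have := a.isLt; omega⟩ : Fin (2 + 2 * k))
        ∈ ({finSumFinEquiv.symm (⟨b.val, by have := b.isLt; omega⟩ : Fin (2 + 2 * k)),
            finSumFinEquiv.symm ⟨k + 1 + b.val, by have := b.isLt; omega⟩} : Finset _) := by
      rw [← h2]
      exact Finset.mem_insert_self _ _
    rw [Finset.mem_insert, Finset.mem_singleton] at h3
    have ha := a.isLt
    have hb := b.isLt
    rcases h3 with h3 | h3
    · have h4 := finSumFinEquiv.symm.injective h3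
      have h5 := congrArg Fin.val h4
      exact Fin.ext h5
    · have h4 := finSumFinEquiv.symm.injective h3
      have h5 := congrArg Fin.val h4
      exact absurd (show a.val = k + 1 + b.val from h5) (by omega)
  refine Eq.trans (Finset.sum_image hinj) ?_
  have hterm : ∀ a : Fin (k + 1),
      TensorProduct.lid ℝ ℝ
        (AlternatingMap.domCoprod.summand α (ωpow ω k) (Quotient.mk'' (repρ k a)) y)
      = (-1 : ℝ) ^ k * (c * cval k) := by
    intro a
    rw [summand_eval, repρ_sign, sign_smul_real]
    have ha := a.isLt
    have hffac : α (fun i => y (repρ k a (Sum.inl i))) = c := by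
      have h0 : y (repρ k a (Sum.inl 0)) = E a := by
        rw [hrep0, hyx, Equiv.apply_symm_apply, hx'E _ (show a.val < k + 1 from ha)]
      have h1 : y (repρ k a (Sum.inl 1)) = F a := by
        rw [hrep1, hyx, Equiv.apply_symm_apply,
          hx'F _ (show k + 1 ≤ k + 1 + a.val from by omega)]
        exact congrArg F (Fin.ext (show k + 1 + a.val - (k + 1) = a.val by omega))
      rw [pair_eq (fun i => y (repρ k a (Sum.inl i)))]
      show α ![y (repρ k a (Sum.inl 0)), y (repρ k a (Sum.inl 1))] = c
      rw [h0, h1, hα, hEF, if_pos rfl, mul_one]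
    set E' : Fin k → V := fun t =>
      E ⟨if t.val < a.val then t.val else t.val + 1, by have := t.isLt; split_ifs <;> omega⟩
      with hE'def
    set F' : Fin k → V := fun t =>
      F ⟨if t.val < a.val then t.val else t.val + 1, by have := t.isLt; split_ifs <;> omega⟩
      with hF'def
    have hgfac : (fun r => y (repρ k a (Sum.inr r))) = Tfam E' F' := by
      funext r
      have hr := r.isLt
      have hy1 : y (repρ k a (Sum.inr r))
          = x' (repφ k a ⟨2 + r.val, by omega⟩) := by
        rw [repρ_apply, hyx, Equiv.apply_symm_apply]
        exact congrArg (fun z => x' (repφ k a z)) (Fin.ext (by simp))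
      rw [hy1]
      have hpv := repφ_val k a (2 + r.val) (by omega)
      set p : Fin (2 + 2 * k) := repφ k a ⟨2 + r.val, by omega⟩ with hpdef
      show x' p = Tfam E' F' r
      unfold Tfam
      by_cases h1 : r.val < k
      · rw [dif_pos h1, hE'def]
        by_cases h2 : r.val < a.val
        · have hp1 : p.val = r.val := by rw [hpv]; split_ifs <;> omega
          rw [hx'E p (by omega)]
          exact congrArg E (Fin.ext
            (show p.val = if r.val < a.val then r.val else r.val + 1 from by
              rw [if_pos h2]; exact hp1))
        · have hp1 : p.val = r.val + 1 := by rw [hpv]; split_ifs <;> omega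
          rw [hx'E p (by omega)]
          exact congrArg E (Fin.ext
            (show p.val = if r.val < a.val then r.val else r.val + 1 from by
              rw [if_neg h2]; exact hp1))
      · rw [dif_neg h1, hF'def]
        by_cases h2 : r.val < k + a.val
        · have hp1 : p.val = r.val + 1 := by rw [hpv]; split_ifs <;> omega
          rw [hx'F p (by omega)]
          exact congrArg F (Fin.ext
            (show p.val - (k + 1)
                = if r.val - k < a.val then r.val - k else r.val - k + 1 from by
              rw [if_pos (by omega)]; omega))
        · have hp1 : p.val = r.val + 2 := by rw [hpv]; split_ifs <;> omega
          rw [hx'F p (by omega)]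
          exact congrArg F (Fin.ext
            (show p.val - (k + 1)
                = if r.val - k < a.val then r.val - k else r.val - k + 1 from by
              rw [if_neg (by omega)]; omega))
    have hE'F' : ∀ t s', ω ![E' t, F' s'] = if t = s' then 1 else 0 := by
      intro t s'
      rw [hE'def, hF'def]
      show ω ![E _, F _] = _
      rw [hEF]
      by_cases hts : t = s'
      · subst hts
        rw [if_pos rfl, if_pos rfl]
      · rw [if_neg hts, if_neg]
        intro hq
        rw [Fin.ext_iff] at hq
        have hq2 : (if t.val < a.val then t.val else t.val + 1)
            = (if s'.val < a.val then s'.val else s'.val + 1) := hq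
        apply hts
        apply Fin.ext
        split_ifs at hq2 <;> omega
    have hE'E' : ∀ t s', ω ![E' t, E' s'] = 0 := fun t s' => hEE _ _
    have hF'F' : ∀ t s', ω ![F' t, F' s'] = 0 := fun t s' => hFF _ _
    rw [hffac, hgfac, ωpow_fam ω k E' F' hE'F' hE'E' hF'F']
  rw [Finset.sum_congr rfl (fun a _ => hterm a), Finset.sum_const, Finset.card_univ,
    Fintype.card_fin]
  rw [nsmul_eq_mul]
  push_cast
  ring

noncomputable def toB : LinearMap.BilinForm ℝ V :=
  LinearMap.mk₂ ℝ (fun x y => ω ![x, y])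
    (fun a b c => by
      have := ω.map_update_add ![a, c] 0 a b; simpa [pair_update0] using this)
    (fun r a c => by
      have := ω.map_update_smul ![a, c] 0 r a; simpa [pair_update0] using this)
    (fun a b c => by
      have := ω.map_update_add ![a, b] 1 b c; simpa [pair_update1] using this)
    (fun r a c => by
      have := ω.map_update_smul ![a, c] 1 r c; simpa [pair_update1] using this)

@[simp] theorem toB_apply (x y : V) : toB ω x y = ω ![x, y] := rfl

theorem toB_refl : (toB ω).IsRefl := by
  intro x y h
  simp only [toB_apply] at *
  rw [form_antisymm]; simp [h]

/-- The family predicate: `j` symplectic pairs orthogonal to each other and to `u, v`. -/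
structure IsFam (u v : V) {j : ℕ} (E F : Fin j → V) : Prop where
  hEF : ∀ a b, ω ![E a, F b] = if a = b then 1 else 0
  hEE : ∀ a b, ω ![E a, E b] = 0
  hFF : ∀ a b, ω ![F a, F b] = 0
  huE : ∀ a, ω ![u, E a] = 0
  huF : ∀ a, ω ![u, F a] = 0
  hvE : ∀ a, ω ![v, E a] = 0
  hvF : ∀ a, ω ![v, F a] = 0

theorem exists_fam (n : ℕ) [FiniteDimensional ℝ V] (hdim : finrank ℝ V = 2 * n)
    (hnd : (toB ω).Nondegenerate) (u v : V) (j : ℕ)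
    (hj : finrank ℝ (span ℝ {u, v}) + j ≤ n) :
    ∃ E F : Fin j → V, IsFam ω u v E F := by
  induction j with
  | zero => exact ⟨![], ![], ⟨fun a => a.elim0, fun a => a.elim0, fun a => a.elim0,
      fun a => a.elim0, fun a => a.elim0, fun a => a.elim0, fun a => a.elim0⟩⟩
  | succ j ih =>
    obtain ⟨E, F, hfam⟩ := ih (by omega)
    set G : Fin j ⊕ Fin j → V := Sum.elim E F with hG
    set P : Submodule ℝ V := span ℝ (Set.range G) with hP
    set W : Submodule ℝ V := span ℝ {u, v} ⊔ P with hW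
    set U : Submodule ℝ V := (toB ω).orthogonal W with hU
    -- members of W
    have huW : u ∈ W := Submodule.mem_sup_left (subset_span (by simp))
    have hvW : v ∈ W := Submodule.mem_sup_left (subset_span (by simp))
    have hEW : ∀ a, E a ∈ W := fun a => Submodule.mem_sup_right (subset_span ⟨Sum.inl a, rfl⟩)
    have hFW : ∀ a, F a ∈ W := fun a => Submodule.mem_sup_right (subset_span ⟨Sum.inr a, rfl⟩)
    have hUorth : ∀ x ∈ U, ∀ w ∈ W, ω ![x, w] = 0 := by
      intro x hx w hw
      have := hx w hw
      change toB ω w x = 0 at this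
      have h2 := toB_refl ω _ _ this
      simpa using h2
    -- find a non-isotropic pair in U
    have hkey : ∃ e ∈ U, ∃ f ∈ U, ω ![e, f] ≠ 0 := by
      by_contra hcon
      push_neg at hcon
      have hiso : U ≤ (toB ω).orthogonal U := by
        intro x hx
        rw [LinearMap.BilinForm.mem_orthogonal_iff]
        intro y hy
        have := hcon y hy x hx
        simpa [LinearMap.BilinForm.IsOrtho] using this
      have horth : (toB ω).orthogonal U = W := by
        rw [hU, LinearMap.BilinForm.orthogonal_orthogonal hnd (toB_refl ω)]
      have hUW : U ≤ W := horth ▸ hiso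
      -- U ⊓ P = ⊥
      have hUP : U ⊓ P = ⊥ := by
        rw [eq_bot_iff]
        intro x hx
        rw [Submodule.mem_inf] at hx
        obtain ⟨hxU, hxP⟩ := hx
        rw [hP, mem_span_range_iff_exists_fun] at hxP
        obtain ⟨c, hc⟩ := hxP
        have hcoef : ∀ i, c i = 0 := by
          intro i
          cases i with
          | inl a =>
            have h1 : ω ![x, F a] = 0 := hUorth x hxU _ (hFW a)
            rw [← hc] at h1
            have h2 : toB ω (∑ i, c i • G i) (F a) = 0 := h1
            rw [map_sum] at h2
            simp only [LinearMap.map_smul₂, LinearMap.sum_apply, LinearMap.smul_apply] at h2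
            have h3 : ∀ i, c i • (toB ω (G i)) (F a) = if i = Sum.inl a then c i else 0 := by
              rintro (b | b)
              · simp only [hG, Sum.elim_inl, toB_apply, smul_eq_mul, hfam.hEF b a,
                  Sum.inl.injEq]
                by_cases hba : b = a
                · subst hba; simp
                · rw [if_neg hba, if_neg hba, mul_zero]
              · simp [hG, hfam.hFF b a]
            rw [Finset.sum_congr rfl fun i _ => h3 i, Finset.sum_ite_eq'] at h2
            simpa using h2
          | inr a =>
            have h1 : ω ![x, E a] = 0 := hUorth x hxU _ (hEW a)
            rw [← hc] at h1
            have h2 : toB ω (∑ i, c i • G i) (E a) = 0 := h1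
            rw [map_sum] at h2
            simp only [LinearMap.map_smul₂, LinearMap.sum_apply, LinearMap.smul_apply] at h2
            have h3 : ∀ i, c i • (toB ω (G i)) (E a) = if i = Sum.inr a then -c i else 0 := by
              rintro (b | b)
              · simp [hG, hfam.hEE b a]
              · simp only [hG, Sum.elim_inr, toB_apply, smul_eq_mul, Sum.inr.injEq]
                rw [form_antisymm ω (E a) (F b), hfam.hEF a b]
                by_cases hba : b = a
                · subst hba; simp
                · rw [if_neg (fun h => hba h.symm), if_neg hba]; simp
            rw [Finset.sum_congr rfl fun i _ => h3 i, Finset.sum_ite_eq'] at h2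
            simpa using h2
        rw [← hc]
        simp [hcoef]
      -- dimension count
      have hdimU : finrank ℝ U + finrank ℝ W = 2 * n := by
        rw [hU, LinearMap.BilinForm.finrank_orthogonal hnd, hdim]
        have : finrank ℝ W ≤ 2 * n := hdim ▸ finrank_le W
        omega
      have hsup : finrank ℝ U + finrank ℝ P ≤ finrank ℝ W := by
        have h1 := Submodule.finrank_sup_add_finrank_inf_eq U P
        rw [hUP, finrank_bot, add_zero] at h1
        rw [← h1]
        exact Submodule.finrank_mono (sup_le hUW le_sup_right)
      have hWle : finrank ℝ W ≤ finrank ℝ (span ℝ {u, v}) + finrank ℝ P := by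
        have h1 := Submodule.finrank_sup_add_finrank_inf_eq (span ℝ {u, v} : Submodule ℝ V) P
        rw [← hW] at h1
        omega
      have hPle : finrank ℝ P ≤ 2 * j := by
        have := finrank_range_le_card (R := ℝ) G
        simpa [two_mul, Set.finrank, ← hP] using this
      omega
    obtain ⟨e, he, f, hf, hef⟩ := hkey
    set c : ℝ := ω ![e, f] with hc
    set f' : V := c⁻¹ • f with hf'
    have hf'U : f' ∈ U := Submodule.smul_mem _ _ hf
    have hef' : ω ![e, f'] = 1 := by
      have : toB ω e f' = c⁻¹ * toB ω e f := by rw [hf']; simp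
      rw [show ω ![e, f'] = toB ω e f' from rfl, this]; exact inv_mul_cancel₀ hef
    -- orthogonality of e, f' to old stuff
    have heorth : ∀ w ∈ W, ω ![e, w] = 0 := hUorth e he
    have hforth : ∀ w ∈ W, ω ![f', w] = 0 := hUorth f' hf'U
    refine ⟨Fin.snoc E e, Fin.snoc F f', ?_⟩
    have flip : ∀ x y : V, ω ![x, y] = 0 → ω ![y, x] = 0 := by
      intro x y h; rw [form_antisymm]; simp [h]
    constructor
    · intro a b
      refine Fin.lastCases ?_ (fun a => ?_) a <;> [skip; skip] <;>
        · first
          | (refine Fin.lastCases ?_ (fun b => ?_) b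
             · simp [Fin.snoc_last, hef']
             · simp only [Fin.snoc_last, Fin.snoc_castSucc]
               rw [if_neg (Fin.castSucc_lt_last b).ne']
               exact heorth _ (hFW b))
          | (refine Fin.lastCases ?_ (fun b => ?_) b
             · simp only [Fin.snoc_last, Fin.snoc_castSucc]
               rw [if_neg (Fin.castSucc_lt_last a).ne]
               exact flip _ _ (hforth _ (hEW a))
             · simp only [Fin.snoc_castSucc, Fin.castSucc_inj]
               exact hfam.hEF a b)
    · intro a b
      refine Fin.lastCases ?_ (fun a => ?_) a <;> refine Fin.lastCases ?_ (fun b => ?_) b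
      · simp [Fin.snoc_last, form_self]
      · simp only [Fin.snoc_last, Fin.snoc_castSucc]; exact heorth _ (hEW b)
      · simp only [Fin.snoc_last, Fin.snoc_castSucc]; exact flip _ _ (heorth _ (hEW a))
      · simp only [Fin.snoc_castSucc]; exact hfam.hEE a b
    · intro a b
      refine Fin.lastCases ?_ (fun a => ?_) a <;> refine Fin.lastCases ?_ (fun b => ?_) b
      · simp [Fin.snoc_last, form_self]
      · simp only [Fin.snoc_last, Fin.snoc_castSucc]; exact hforth _ (hFW b)
      · simp only [Fin.snoc_last, Fin.snoc_castSucc]; exact flip _ _ (hforth _ (hFW a))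
      · simp only [Fin.snoc_castSucc]; exact hfam.hFF a b
    · intro a
      refine Fin.lastCases ?_ (fun a => ?_) a
      · simp only [Fin.snoc_last]; exact flip _ _ (heorth _ huW)
      · simp only [Fin.snoc_castSucc]; exact hfam.huE a
    · intro a
      refine Fin.lastCases ?_ (fun a => ?_) a
      · simp only [Fin.snoc_last]; exact flip _ _ (hforth _ huW)
      · simp only [Fin.snoc_castSucc]; exact hfam.huF a
    · intro a
      refine Fin.lastCases ?_ (fun a => ?_) a
      · simp only [Fin.snoc_last]; exact flip _ _ (heorth _ hvW)
      · simp only [Fin.snoc_castSucc]; exact hfam.hvE a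
    · intro a
      refine Fin.lastCases ?_ (fun a => ?_) a
      · simp only [Fin.snoc_last]; exact flip _ _ (hforth _ hvW)
      · simp only [Fin.snoc_castSucc]; exact hfam.hvF a


/-- if `n ≥ 2`, `α` is an alternating 2-form and `α ∧ ω^k = 0` for some
`0 ≤ k ≤ n - 2`, then `α = 0`. -/
theorem stmt7 (n : ℕ) (hn : 2 ≤ n) (V : Type*) [AddCommGroup V] [Module ℝ V]
    [FiniteDimensional ℝ V] (hdim : Module.finrank ℝ V = 2 * n)
    (ω : V [⋀^Fin 2]→ₗ[ℝ] ℝ) (hω : ∀ v : V, (∀ w : V, ω ![v, w] = 0) → v = 0)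
    (α : V [⋀^Fin 2]→ₗ[ℝ] ℝ) (k : ℕ) (hk : k ≤ n - 2)
    (h : wedge α (ωpow ω k) = 0) : α = 0 := by
  classical
  have hkn : k + 2 ≤ n := by omega
  have hnd : (toB ω).Nondegenerate := by
    refine (LinearMap.IsRefl.nondegenerate_iff_separatingLeft (toB_refl ω)).mpr ?_
    intro x hx
    exact hω x (fun w => hx w)
  -- step 1: α vanishes on ω-orthogonal pairs
  have step1 : ∀ u v : V, ω ![u, v] = 0 → α ![u, v] = 0 := by
    intro u v huv
    have hspan : finrank ℝ (span ℝ ({u, v} : Set V)) + k ≤ n := by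
      have h1 : finrank ℝ (span ℝ ({u, v} : Set V)) ≤ 2 := by
        have h2 := finrank_span_le_card (R := ℝ) ({u, v} : Set V)
        have h3 : ({u, v} : Set V).toFinset.card ≤ 2 := by
          rw [Set.toFinset_insert]
          refine le_trans (Finset.card_insert_le _ _) ?_
          simp
        omega
      omega
    obtain ⟨E, F, hfam⟩ := exists_fam ω n hdim hnd u v k hspan
    have h2 := wedge_eval_uv ω k α u v E F huv hfam.hEF hfam.hEE hfam.hFF
      hfam.huE hfam.huF hfam.hvE hfam.hvF
    rw [h, AlternatingMap.zero_apply] at h2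
    rcases mul_eq_zero.mp h2.symm with h3 | h3
    · exact h3
    · exact absurd h3 (cval_ne_zero k)
  have step1' : ∀ u v : V, toB ω u v = 0 → toB α u v = 0 := fun u v hh => step1 u v hh
  -- step 2: pointwise vanishing of α
  have pointwise : ∀ u v : V, α ![u, v] = 0 := by
    by_cases hV : ∃ x₀ y₀ : V, ω ![x₀, y₀] ≠ 0
    · obtain ⟨x₀, y₀, hx₀⟩ := hV
      have hx₀' : toB ω x₀ y₀ ≠ 0 := hx₀
      set c : ℝ := toB α x₀ y₀ / toB ω x₀ y₀ with hcdef
      have ratEq : ∀ u w w' : V, toB ω u w ≠ 0 → toB ω u w' ≠ 0 →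
          toB α u w / toB ω u w = toB α u w' / toB ω u w' := by
        intro u w w' hw hw'
        rw [div_eq_div_iff hw hw']
        have hz : toB ω u (toB ω u w • w' - toB ω u w' • w) = 0 := by
          rw [map_sub, map_smul, map_smul, smul_eq_mul, smul_eq_mul]
          ring
        have hz2 := step1' u _ hz
        rw [map_sub, map_smul, map_smul, smul_eq_mul, smul_eq_mul] at hz2
        linarith
      have ratSymm : ∀ u w : V, toB α u w / toB ω u w = toB α w u / toB ω w u := by
        intro u w
        have h1 : toB α w u = - toB α u w := form_antisymm α u w
        have h2 : toB ω w u = - toB ω u w := form_antisymm ω u w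
        rw [h1, h2, neg_div_neg_eq]
      have hc : ∀ u w : V, toB α u w = c * toB ω u w := by
        intro u w
        by_cases h1 : toB ω u w = 0
        · rw [h1, mul_zero]
          exact step1' u w h1
        · have hlam : toB α u w / toB ω u w = c := by
            by_cases h2 : toB ω x₀ w ≠ 0
            · calc toB α u w / toB ω u w = toB α w u / toB ω w u := ratSymm u w
                _ = toB α w x₀ / toB ω w x₀ := by
                    apply ratEq
                    · intro hz
                      apply h1
                      have := form_antisymm ω w u
                      have h4 : toB ω u w = - toB ω w u := by
                        rw [show toB ω w u = - toB ω u w from form_antisymm ω u w]; ring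
                      rw [h4, hz, neg_zero]
                    · intro hz
                      apply h2
                      rw [show toB ω x₀ w = - toB ω w x₀ from form_antisymm ω w x₀, hz, neg_zero]
                _ = toB α x₀ w / toB ω x₀ w := ratSymm w x₀
                _ = toB α x₀ y₀ / toB ω x₀ y₀ := ratEq x₀ w y₀ h2 hx₀'
            · push_neg at h2
              by_cases h3 : toB ω u y₀ ≠ 0
              · calc toB α u w / toB ω u w = toB α u y₀ / toB ω u y₀ := ratEq u w y₀ h1 h3
                  _ = toB α y₀ u / toB ω y₀ u := ratSymm u y₀
                  _ = toB α y₀ x₀ / toB ω y₀ x₀ := by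
                      apply ratEq
                      · intro hz
                        apply h3
                        rw [show toB ω u y₀ = - toB ω y₀ u from form_antisymm ω y₀ u, hz, neg_zero]
                      · intro hz
                        apply hx₀'
                        rw [show toB ω x₀ y₀ = - toB ω y₀ x₀ from form_antisymm ω y₀ x₀, hz, neg_zero]
                  _ = toB α x₀ y₀ / toB ω x₀ y₀ := ratSymm y₀ x₀
              · push_neg at h3
                have hw2 : toB ω u (w + y₀) ≠ 0 := by
                  rw [map_add, h3, add_zero]; exact h1
                have hx2 : toB ω x₀ (w + y₀) ≠ 0 := by
                  rw [map_add, h2, zero_add]; exact hx₀'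
                calc toB α u w / toB ω u w
                    = toB α u (w + y₀) / toB ω u (w + y₀) := ratEq u w (w + y₀) h1 hw2
                  _ = toB α (w + y₀) u / toB ω (w + y₀) u := ratSymm u (w + y₀)
                  _ = toB α (w + y₀) x₀ / toB ω (w + y₀) x₀ := by
                      apply ratEq
                      · intro hz
                        apply hw2
                        rw [show toB ω u (w + y₀) = - toB ω (w + y₀) u
                          from form_antisymm ω (w + y₀) u, hz, neg_zero]
                      · intro hz
                        apply hx2
                        rw [show toB ω x₀ (w + y₀) = - toB ω (w + y₀) x₀
                          from form_antisymm ω (w + y₀) x₀, hz, neg_zero]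
                  _ = toB α x₀ (w + y₀) / toB ω x₀ (w + y₀) := ratSymm (w + y₀) x₀
                  _ = toB α x₀ y₀ / toB ω x₀ y₀ := ratEq x₀ (w + y₀) y₀ hx2 hx₀'
          rw [← hlam, div_mul_cancel₀ _ h1]
      -- now c = 0 via a (k+1)-family
      have hspan0 : finrank ℝ (span ℝ ({(0 : V), 0} : Set V)) + (k + 1) ≤ n := by
        have h1 : ({(0 : V), 0} : Set V) = {0} := by simp
        rw [h1, span_zero_singleton, finrank_bot]
        omega
      obtain ⟨E, F, hfam⟩ := exists_fam ω n hdim hnd 0 0 (k + 1) hspan0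
      have h3 := wedge_eval_diag ω k c α (fun x y => hc x y) E F hfam.hEF hfam.hEE hfam.hFF
      rw [h, AlternatingMap.zero_apply] at h3
      have hc0 : c = 0 := by
        have h4 := h3.symm
        rcases mul_eq_zero.mp h4 with h5 | h5
        · exact absurd h5 (by positivity)
        · rcases mul_eq_zero.mp h5 with h6 | h6
          · exact absurd h6 (pow_ne_zero _ (by norm_num))
          · rcases mul_eq_zero.mp h6 with h7 | h7
            · exact h7
            · exact absurd h7 (cval_ne_zero k)
      intro u v
      have := hc u v
      rw [hc0, zero_mul] at this
      exact this
    · push_neg at hV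
      intro u v
      have hu : u = 0 := hω u (fun w => hV u w)
      rw [hu]
      exact α.map_coord_zero 0 (by simp)
  ext v
  rw [pair_eq v]
  rw [pointwise]
  rfl
end

section
/- Let Q_{ij}, P^{ij}, A^i_j (1 ≤ i, j ≤ n) be C² functions on ℝ^{2n} with Q_{ji} = −Q_{ij} and P^{ji} = −P^{ij}. Then the vector field X on ℝ^{2n} whose q^i-component is ∂P^{ij}/∂q^j + ∂A^j_j/∂p_i − ∂A^i_j/∂p_j and whose p_i-component is ∂Q_{ij}/∂p_j − ∂A^j_j/∂q^i + ∂A^j_i/∂q^j (summation over repeated indices, j summed from 1 to n) has identically vanishing divergence: div X = 0 everywhere. Hence the general volume-preserving equations q̇^i = ∂P^{ij}/∂q^j + ∂A^j_j/∂p_i − ∂A^i_j/∂p_j, ṗ_i = ∂Q_{ij}/∂p_j − ∂A^j_j/∂q^i + ∂A^j_i/∂q^j define a divergence-free (volume-preserving) system. -/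
open MeasureTheory

/-- The phase space `ℝ^{2n}` with coordinates `(q, p)`. -/
abbrev Phase (n : ℕ) := (Fin n → ℝ) × (Fin n → ℝ)

/-- The standard symplectic bilinear form
`ω₀((q,p),(q',p')) = Σᵢ (pᵢ q'ⁱ − qⁱ p'ᵢ)` on `ℝ^{2n}`. -/
def omega0 {n : ℕ} (u v : Phase n) : ℝ :=
  ∑ i, (u.2 i * v.1 i - u.1 i * v.2 i)

/-- The coordinate direction `∂/∂qⁱ`. -/
noncomputable def eQ (n : ℕ) (i : Fin n) : Phase n := (Pi.single i 1, 0)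

/-- The coordinate direction `∂/∂pᵢ`. -/
noncomputable def eP (n : ℕ) (i : Fin n) : Phase n := (0, Pi.single i 1)


lemma aux_diff {n : ℕ} (f : Phase n → ℝ) (hf : ContDiff ℝ 2 f) (v : Phase n) :
    Differentiable ℝ (fun y => fderiv ℝ f y v) := by
  have h : Differentiable ℝ (fderiv ℝ f) :=
    (hf.fderiv_right (m := 1) le_rfl).differentiable one_ne_zero
  exact fun x => (h x).clm_apply (differentiableAt_const v)

lemma aux_symm {n : ℕ} (f : Phase n → ℝ) (hf : ContDiff ℝ 2 f) (x v w : Phase n) :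
    fderiv ℝ (fun y => fderiv ℝ f y v) x w = fderiv ℝ (fun y => fderiv ℝ f y w) x v := by
  have hd : DifferentiableAt ℝ (fderiv ℝ f) x :=
    ((hf.fderiv_right (m := 1) le_rfl).differentiable one_ne_zero) x
  have key : ∀ u : Phase n, fderiv ℝ (fun y => fderiv ℝ f y u) x
      = (fderiv ℝ (fderiv ℝ f) x).flip u := by
    intro u
    have := fderiv_clm_apply (c := fderiv ℝ f) (u := fun _ => u) hd (differentiableAt_const u)
    simpa using this
  rw [key v, key w]
  simp only [ContinuousLinearMap.flip_apply]
  exact (hf.contDiffAt.isSymmSndFDerivAt (by simp [minSmoothness_of_isRCLikeNormedField]) w v)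

lemma aux_neg {n : ℕ} (f g : Phase n → ℝ) (hg : ∀ y, g y = -f y) (x v w : Phase n) :
    fderiv ℝ (fun y => fderiv ℝ g y v) x w = -(fderiv ℝ (fun y => fderiv ℝ f y v) x w) := by
  have h1 : (fun y => fderiv ℝ g y v) = fun y => -(fderiv ℝ f y v) := by
    funext y
    have : g = fun z => -f z := funext hg
    rw [this, fderiv_fun_neg]
    simp
  rw [h1, fderiv_fun_neg]
  simp

/-- the general volume-preserving equations. Given C² functions `Q i j`
(antisymmetric), `P i j` (antisymmetric) and `A i j` on `ℝ^{2n}`, the vector field with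
`qⁱ`-component `∂P^{ij}/∂q^j + ∂A^j_j/∂p_i − ∂A^i_j/∂p_j` and `p_i`-component
`∂Q_{ij}/∂p_j − ∂A^j_j/∂q^i + ∂A^j_i/∂q^j` (summed over `j`) has vanishing divergence
`Σᵢ (∂X^{qⁱ}/∂qⁱ + ∂X^{pᵢ}/∂pᵢ) = 0`. -/
theorem stmt15 (n : ℕ) (hn : 1 ≤ n) (Qf Pf Af : Fin n → Fin n → Phase n → ℝ)
    (hQs : ∀ i j, ContDiff ℝ 2 (Qf i j)) (hPs : ∀ i j, ContDiff ℝ 2 (Pf i j))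
    (hAs : ∀ i j, ContDiff ℝ 2 (Af i j))
    (hQa : ∀ i j x, Qf j i x = -Qf i j x) (hPa : ∀ i j x, Pf j i x = -Pf i j x) :
    ∀ x : Phase n,
      (∑ i, fderiv ℝ
          (fun y => ∑ j, (fderiv ℝ (Pf i j) y (eQ n j) + fderiv ℝ (Af j j) y (eP n i)
            - fderiv ℝ (Af i j) y (eP n j))) x (eQ n i)) +
        (∑ i, fderiv ℝ
          (fun y => ∑ j, (fderiv ℝ (Qf i j) y (eP n j) - fderiv ℝ (Af j j) y (eQ n i)
            + fderiv ℝ (Af j i) y (eQ n j))) x (eP n i)) = 0 := by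
  intro x
  have hstep1 : ∀ i : Fin n, fderiv ℝ
      (fun y => ∑ j, (fderiv ℝ (Pf i j) y (eQ n j) + fderiv ℝ (Af j j) y (eP n i)
        - fderiv ℝ (Af i j) y (eP n j))) x (eQ n i)
      = ∑ j, (fderiv ℝ (fun y => fderiv ℝ (Pf i j) y (eQ n j)) x (eQ n i)
          + fderiv ℝ (fun y => fderiv ℝ (Af j j) y (eP n i)) x (eQ n i)
          - fderiv ℝ (fun y => fderiv ℝ (Af i j) y (eP n j)) x (eQ n i)) := by
    intro i
    rw [fderiv_fun_sum (A := fun j y => fderiv ℝ (Pf i j) y (eQ n j) + fderiv ℝ (Af j j) y (eP n i)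
        - fderiv ℝ (Af i j) y (eP n j)) (fun j _ =>
      (((aux_diff _ (hPs i j) _ x).add (aux_diff _ (hAs j j) _ x)).sub (aux_diff _ (hAs i j) _ x)))]
    rw [ContinuousLinearMap.sum_apply]
    refine Finset.sum_congr rfl fun j _ => ?_
    rw [fderiv_fun_sub ((aux_diff _ (hPs i j) _ x).fun_add (aux_diff _ (hAs j j) _ x)) (aux_diff _ (hAs i j) _ x),
        fderiv_fun_add (aux_diff _ (hPs i j) _ x) (aux_diff _ (hAs j j) _ x)]
    simp
  have hstep2 : ∀ i : Fin n, fderiv ℝ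
      (fun y => ∑ j, (fderiv ℝ (Qf i j) y (eP n j) - fderiv ℝ (Af j j) y (eQ n i)
        + fderiv ℝ (Af j i) y (eQ n j))) x (eP n i)
      = ∑ j, (fderiv ℝ (fun y => fderiv ℝ (Qf i j) y (eP n j)) x (eP n i)
          - fderiv ℝ (fun y => fderiv ℝ (Af j j) y (eQ n i)) x (eP n i)
          + fderiv ℝ (fun y => fderiv ℝ (Af j i) y (eQ n j)) x (eP n i)) := by
    intro i
    rw [fderiv_fun_sum (A := fun j y => fderiv ℝ (Qf i j) y (eP n j) - fderiv ℝ (Af j j) y (eQ n i)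
        + fderiv ℝ (Af j i) y (eQ n j)) (fun j _ =>
      (((aux_diff _ (hQs i j) _ x).sub (aux_diff _ (hAs j j) _ x)).add (aux_diff _ (hAs j i) _ x)))]
    rw [ContinuousLinearMap.sum_apply]
    refine Finset.sum_congr rfl fun j _ => ?_
    rw [fderiv_fun_add ((aux_diff _ (hQs i j) _ x).fun_sub (aux_diff _ (hAs j j) _ x)) (aux_diff _ (hAs j i) _ x),
        fderiv_fun_sub (aux_diff _ (hQs i j) _ x) (aux_diff _ (hAs j j) _ x)]
    simp
  simp only [Finset.sum_congr rfl fun i _ => hstep1 i, Finset.sum_congr rfl fun i _ => hstep2 i]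
  simp only [Finset.sum_sub_distrib, Finset.sum_add_distrib]
  have hT1 : ∑ i : Fin n, ∑ j : Fin n,
      fderiv ℝ (fun y => fderiv ℝ (Pf i j) y (eQ n j)) x (eQ n i) = 0 := by
    have hterm : ∀ i j : Fin n, fderiv ℝ (fun y => fderiv ℝ (Pf j i) y (eQ n i)) x (eQ n j)
        = -(fderiv ℝ (fun y => fderiv ℝ (Pf i j) y (eQ n j)) x (eQ n i)) := by
      intro i j
      rw [aux_neg (Pf i j) (Pf j i) (hPa i j) x]
      exact neg_inj.mpr (aux_symm _ (hPs i j) x _ _)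
    have h : (∑ i : Fin n, ∑ j : Fin n,
        fderiv ℝ (fun y => fderiv ℝ (Pf i j) y (eQ n j)) x (eQ n i))
        = -∑ i : Fin n, ∑ j : Fin n,
        fderiv ℝ (fun y => fderiv ℝ (Pf i j) y (eQ n j)) x (eQ n i) := by
      calc (∑ i : Fin n, ∑ j : Fin n,
            fderiv ℝ (fun y => fderiv ℝ (Pf i j) y (eQ n j)) x (eQ n i))
          = ∑ i : Fin n, ∑ j : Fin n,
            fderiv ℝ (fun y => fderiv ℝ (Pf j i) y (eQ n i)) x (eQ n j) := Finset.sum_comm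
        _ = ∑ i : Fin n, ∑ j : Fin n,
            -(fderiv ℝ (fun y => fderiv ℝ (Pf i j) y (eQ n j)) x (eQ n i)) :=
            Finset.sum_congr rfl fun i _ => Finset.sum_congr rfl fun j _ => hterm i j
        _ = -∑ i : Fin n, ∑ j : Fin n,
            fderiv ℝ (fun y => fderiv ℝ (Pf i j) y (eQ n j)) x (eQ n i) := by
            simp [Finset.sum_neg_distrib]
    linarith
  have hT4 : ∑ i : Fin n, ∑ j : Fin n,
      fderiv ℝ (fun y => fderiv ℝ (Qf i j) y (eP n j)) x (eP n i) = 0 := by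
    have hterm : ∀ i j : Fin n, fderiv ℝ (fun y => fderiv ℝ (Qf j i) y (eP n i)) x (eP n j)
        = -(fderiv ℝ (fun y => fderiv ℝ (Qf i j) y (eP n j)) x (eP n i)) := by
      intro i j
      rw [aux_neg (Qf i j) (Qf j i) (hQa i j) x]
      exact neg_inj.mpr (aux_symm _ (hQs i j) x _ _)
    have h : (∑ i : Fin n, ∑ j : Fin n,
        fderiv ℝ (fun y => fderiv ℝ (Qf i j) y (eP n j)) x (eP n i))
        = -∑ i : Fin n, ∑ j : Fin n,
        fderiv ℝ (fun y => fderiv ℝ (Qf i j) y (eP n j)) x (eP n i) := by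
      calc (∑ i : Fin n, ∑ j : Fin n,
            fderiv ℝ (fun y => fderiv ℝ (Qf i j) y (eP n j)) x (eP n i))
          = ∑ i : Fin n, ∑ j : Fin n,
            fderiv ℝ (fun y => fderiv ℝ (Qf j i) y (eP n i)) x (eP n j) := Finset.sum_comm
        _ = ∑ i : Fin n, ∑ j : Fin n,
            -(fderiv ℝ (fun y => fderiv ℝ (Qf i j) y (eP n j)) x (eP n i)) :=
            Finset.sum_congr rfl fun i _ => Finset.sum_congr rfl fun j _ => hterm i j
        _ = -∑ i : Fin n, ∑ j : Fin n,
            fderiv ℝ (fun y => fderiv ℝ (Qf i j) y (eP n j)) x (eP n i) := by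
            simp [Finset.sum_neg_distrib]
    linarith
  have hT25 : ∑ i : Fin n, ∑ j : Fin n,
      fderiv ℝ (fun y => fderiv ℝ (Af j j) y (eP n i)) x (eQ n i)
      = ∑ i : Fin n, ∑ j : Fin n,
      fderiv ℝ (fun y => fderiv ℝ (Af j j) y (eQ n i)) x (eP n i) := by
    refine Finset.sum_congr rfl fun i _ => Finset.sum_congr rfl fun j _ => ?_
    exact aux_symm _ (hAs j j) x _ _
  have hT36 : ∑ i : Fin n, ∑ j : Fin n,
      fderiv ℝ (fun y => fderiv ℝ (Af j i) y (eQ n j)) x (eP n i)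
      = ∑ i : Fin n, ∑ j : Fin n,
      fderiv ℝ (fun y => fderiv ℝ (Af i j) y (eP n j)) x (eQ n i) := by
    rw [Finset.sum_comm]
    refine Finset.sum_congr rfl fun i _ => Finset.sum_congr rfl fun j _ => ?_
    exact aux_symm _ (hAs i j) x _ _
  rw [hT1, hT4, hT25, hT36]
  ring
end

section
/- Let n ≥ 2 and let X be a smooth vector field on ℝ^{2n} with div X ≡ 0. Then there exist smooth functions Q_{ij}, P^{ij}, A^i_j on ℝ^{2n} (1 ≤ i, j ≤ n) with Q_{ji} = −Q_{ij} and P^{ji} = −P^{ij} such that the q^i-component of X equals ∂P^{ij}/∂q^j + ∂A^j_j/∂p_i − ∂A^i_j/∂p_j and the p_i-component of X equals ∂Q_{ij}/∂p_j − ∂A^j_j/∂q^i + ∂A^j_i/∂q^j (summation over repeated indices). That is, every divergence-free vector field on ℝ^{2n} is described by the general volume-preserving equations for some 2-form α = ½ Q_{ij} dq^i∧dq^j + A^i_j dp_i∧dq^j + ½ P^{ij} dp_i∧dp_j. -/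
open MeasureTheory

open intervalIntegral Asymptotics
set_option synthInstance.maxHeartbeats 1000000
set_option maxHeartbeats 1000000
set_option linter.unusedSectionVars false
set_option linter.unusedVariables false
set_option linter.unnecessarySeqFocus false

section Master

variable {E : Type} [NormedAddCommGroup E] [NormedSpace ℝ E] [FiniteDimensional ℝ E]
variable {F : Type} [NormedAddCommGroup F] [NormedSpace ℝ F] [CompleteSpace F]

/-- partial derivative in the first (parameter) variable -/
noncomputable def D1 (f : E × ℝ → F) (w : E × ℝ) : E →L[ℝ] F :=
  (fderiv ℝ f w).comp (ContinuousLinearMap.inl ℝ E ℝ)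

theorem contDiff_D1 {f : E × ℝ → F} (hf : ContDiff ℝ (⊤ : ℕ∞) f) :
    ContDiff ℝ (⊤ : ℕ∞) (D1 f) := by
  have h1 : ContDiff ℝ (⊤ : ℕ∞) (fderiv ℝ f) := (contDiff_infty_iff_fderiv.1 hf).2
  exact (((ContinuousLinearMap.compL ℝ E (E × ℝ) F).flip
    (ContinuousLinearMap.inl ℝ E ℝ)).contDiff).comp h1

theorem hasFDerivAt_slice {f : E × ℝ → F} (hf : ContDiff ℝ (⊤ : ℕ∞) f) (x : E) (t : ℝ) :
    HasFDerivAt (fun y => f (y, t)) (D1 f (x, t)) x := by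
  have h1 : HasFDerivAt f (fderiv ℝ f (x, t)) (x, t) :=
    (hf.differentiable (by norm_num) (x, t)).hasFDerivAt
  have h2 : HasFDerivAt (fun y : E => (y, t)) (ContinuousLinearMap.inl ℝ E ℝ) x := by
    exact (hasFDerivAt_id x).prodMk (hasFDerivAt_const t x)
  exact h1.comp x h2

theorem cont_slice {f : E × ℝ → F} (hf : Continuous f) (x : E) :
    Continuous fun t => f (x, t) :=
  hf.comp (continuous_const.prodMk continuous_id)

theorem lemA {f : E × ℝ → F} (hf : ContDiff ℝ (⊤ : ℕ∞) f) (a b : ℝ) (x₀ : E) :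
    HasFDerivAt (fun x => ∫ t in a..b, f (x, t)) (∫ t in a..b, D1 f (x₀, t)) x₀ := by
  obtain ⟨C, hC⟩ : ∃ C, ∀ w ∈ Metric.closedBall x₀ 1 ×ˢ Set.uIcc a b, ‖D1 f w‖ ≤ C :=
    ((isCompact_closedBall x₀ 1).prod isCompact_uIcc).exists_bound_of_continuousOn
      (contDiff_D1 hf).continuous.continuousOn
  apply intervalIntegral.hasFDerivAt_integral_of_dominated_of_fderiv_le
    (F' := fun x t => D1 f (x, t)) (bound := fun _ => C) (s := Metric.ball x₀ 1) (Metric.ball_mem_nhds x₀ one_pos)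
  · exact Filter.Eventually.of_forall fun x =>
      ((cont_slice hf.continuous x).aestronglyMeasurable)
  · exact (cont_slice hf.continuous x₀).intervalIntegrable a b
  · exact ((contDiff_D1 hf).continuous.comp
      (continuous_const.prodMk continuous_id)).aestronglyMeasurable
  · refine Filter.Eventually.of_forall fun t ht x hx => hC (x, t) ?_
    exact ⟨Metric.ball_subset_closedBall hx, Set.Ioc_subset_Icc_self ht⟩
  · exact intervalIntegrable_const
  · exact Filter.Eventually.of_forall fun t _ x _ => hasFDerivAt_slice hf x t

theorem lemB {f : E × ℝ → F} (hf : ContDiff ℝ (⊤ : ℕ∞) f) (z₀ : E × ℝ) :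
    HasFDerivAt (fun z : E × ℝ => ∫ t in z₀.2..z.2, f (z.1, t))
      ((ContinuousLinearMap.snd ℝ E ℝ).smulRight (f z₀)) z₀ := by
  rw [hasFDerivAt_iff_isLittleO, isLittleO_iff]
  intro c hc
  obtain ⟨δ, hδ, hball⟩ : ∃ δ > 0, ∀ w, dist w z₀ < δ → dist (f w) (f z₀) < c := by
    have := Metric.tendsto_nhds.1 (hf.continuous.tendsto z₀) c hc
    rcases Metric.eventually_nhds_iff.1 this with ⟨δ, hδ, h⟩
    exact ⟨δ, hδ, fun w hw => h hw⟩
  rw [Metric.eventually_nhds_iff]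
  refine ⟨δ, hδ, fun z hz => ?_⟩
  have hint : IntervalIntegrable (fun t => f (z.1, t)) volume z₀.2 z.2 :=
    (cont_slice hf.continuous z.1).intervalIntegrable _ _
  have hsub : (∫ t in z₀.2..z.2, f (z.1, t)) - (z.2 - z₀.2) • f z₀
      = ∫ t in z₀.2..z.2, (f (z.1, t) - f z₀) := by
    rw [intervalIntegral.integral_sub hint intervalIntegrable_const,
      intervalIntegral.integral_const]
  have hb : ∀ t ∈ Set.uIoc z₀.2 z.2, ‖f (z.1, t) - f z₀‖ ≤ c := by
    intro t ht
    have ht' : |t - z₀.2| ≤ |z.2 - z₀.2| := by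
      rcases le_total z₀.2 z.2 with h | h
      · rw [Set.uIoc_of_le h] at ht
        rw [abs_of_nonneg (by linarith [ht.1]), abs_of_nonneg (by linarith)]
        linarith [ht.2]
      · rw [Set.uIoc_of_ge h] at ht
        rw [abs_of_nonpos (by linarith [ht.2]), abs_of_nonpos (by linarith)]
        linarith [ht.1]
    have hdist : dist (z.1, t) z₀ < δ := by
      rw [Prod.dist_eq]
      have h1 : dist z.1 z₀.1 ≤ dist z z₀ := le_max_left _ _
      have h2 : dist t z₀.2 ≤ dist z.2 z₀.2 := by
        rw [Real.dist_eq, Real.dist_eq]; exact ht'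
      have h3 : dist z.2 z₀.2 ≤ dist z z₀ := le_max_right _ _
      exact max_lt (lt_of_le_of_lt h1 hz) (lt_of_le_of_lt (h2.trans h3) hz)
    exact le_of_lt (by simpa [dist_eq_norm] using hball _ hdist)
  calc ‖(∫ t in z₀.2..z.2, f (z.1, t)) - (∫ t in z₀.2..z₀.2, f (z₀.1, t))
        - ((ContinuousLinearMap.snd ℝ E ℝ).smulRight (f z₀)) (z - z₀)‖
      = ‖∫ t in z₀.2..z.2, (f (z.1, t) - f z₀)‖ := by
        rw [intervalIntegral.integral_same]; rw [sub_zero]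
        simp only [ContinuousLinearMap.smulRight_apply, ContinuousLinearMap.coe_snd']
        rw [← hsub]; rfl
    _ ≤ c * |z.2 - z₀.2| := intervalIntegral.norm_integral_le_of_norm_le_const hb
    _ ≤ c * ‖z - z₀‖ := by
        apply mul_le_mul_of_nonneg_left _ (le_of_lt hc)
        rw [Prod.norm_def]
        exact le_max_right _ _

end Master

section Master2

variable {E : Type} [NormedAddCommGroup E] [NormedSpace ℝ E] [FiniteDimensional ℝ E]
variable {F : Type} [NormedAddCommGroup F] [NormedSpace ℝ F] [CompleteSpace F]

theorem master_hasFDerivAt {f : E × ℝ → F} (hf : ContDiff ℝ (⊤ : ℕ∞) f) (z₀ : E × ℝ) :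
    HasFDerivAt (fun z : E × ℝ => ∫ t in (0:ℝ)..z.2, f (z.1, t))
      ((∫ t in (0:ℝ)..z₀.2, D1 f (z₀.1, t)).comp (ContinuousLinearMap.fst ℝ E ℝ)
        + (ContinuousLinearMap.snd ℝ E ℝ).smulRight (f z₀)) z₀ := by
  have h1 : HasFDerivAt (fun z : E × ℝ => ∫ t in (0:ℝ)..z₀.2, f (z.1, t))
      ((∫ t in (0:ℝ)..z₀.2, D1 f (z₀.1, t)).comp (ContinuousLinearMap.fst ℝ E ℝ)) z₀ :=
    (lemA hf 0 z₀.2 z₀.1).comp z₀ hasFDerivAt_fst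
  have h2 := lemB hf z₀
  have h3 := h1.add h2
  apply h3.congr_of_eventuallyEq
  apply Filter.Eventually.of_forall
  intro z
  show (∫ t in (0:ℝ)..z.2, f (z.1, t)) = _
  rw [← intervalIntegral.integral_add_adjacent_intervals
    ((cont_slice hf.continuous z.1).intervalIntegrable 0 z₀.2)
    ((cont_slice hf.continuous z.1).intervalIntegrable z₀.2 z.2)]
  rfl

theorem master_contDiff {f : E × ℝ → F} (hf : ContDiff ℝ (⊤ : ℕ∞) f) :
    ContDiff ℝ (⊤ : ℕ∞) (fun z : E × ℝ => ∫ t in (0:ℝ)..z.2, f (z.1, t)) := by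
  suffices H : ∀ (m : ℕ) (F : Type) [NormedAddCommGroup F] [NormedSpace ℝ F]
      [CompleteSpace F] (f : E × ℝ → F), ContDiff ℝ (⊤ : ℕ∞) f →
      ContDiff ℝ (m : ℕ) (fun z : E × ℝ => ∫ t in (0:ℝ)..z.2, f (z.1, t)) by
    exact contDiff_infty.2 fun m => H m F f hf
  intro m
  induction m with
  | zero =>
    intro F _ _ _ f hf
    rw [show ((0:ℕ) : WithTop ℕ∞) = 0 by rfl, contDiff_zero]
    exact continuous_iff_continuousAt.2 fun z =>
      (master_hasFDerivAt hf z).differentiableAt.continuousAt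
  | succ m ih =>
    intro F _ _ _ f hf
    have hdiff : Differentiable ℝ (fun z : E × ℝ => ∫ t in (0:ℝ)..z.2, f (z.1, t)) :=
      fun z => (master_hasFDerivAt hf z).differentiableAt
    rw [show ((m + 1 : ℕ) : WithTop ℕ∞) = (m : ℕ) + 1 by push_cast; rfl,
      contDiff_succ_iff_fderiv]
    refine ⟨hdiff, by simp, ?_⟩
    have heq : fderiv ℝ (fun z : E × ℝ => ∫ t in (0:ℝ)..z.2, f (z.1, t))
        = fun z : E × ℝ => (∫ t in (0:ℝ)..z.2, D1 f (z.1, t)).comp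
            (ContinuousLinearMap.fst ℝ E ℝ)
          + (ContinuousLinearMap.snd ℝ E ℝ).smulRight (f z) := by
      funext z
      exact (master_hasFDerivAt hf z).fderiv
    rw [heq]
    apply ContDiff.add
    · exact (((ContinuousLinearMap.compL ℝ (E × ℝ) E F).flip
        (ContinuousLinearMap.fst ℝ E ℝ)).contDiff).comp
        (ih (E →L[ℝ] F) (D1 f) (contDiff_D1 hf))
    · exact ((ContinuousLinearMap.smulRightL ℝ (E × ℝ) F
        (ContinuousLinearMap.snd ℝ E ℝ)).contDiff).comp (hf.of_le (by exact_mod_cast le_top))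

end Master2

section Prim

variable {n : ℕ}

/-- `(x,t) ↦ (x.1, x.2 with k-th coordinate replaced by t)` as a CLM. -/
noncomputable def Umap (n : ℕ) (k : Fin n) : (Phase n × ℝ) →L[ℝ] Phase n :=
  ((ContinuousLinearMap.fst ℝ (Fin n → ℝ) (Fin n → ℝ)).comp
    (ContinuousLinearMap.fst ℝ (Phase n) ℝ)).prod
   (ContinuousLinearMap.pi fun j => if j = k then ContinuousLinearMap.snd ℝ (Phase n) ℝ
      else (ContinuousLinearMap.proj j).comp
        ((ContinuousLinearMap.snd ℝ (Fin n → ℝ) (Fin n → ℝ)).comp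
          (ContinuousLinearMap.fst ℝ (Phase n) ℝ)))

/-- `(x,t) ↦ (x.1, x.2 with k-th coordinate replaced by 0 and l-th by t)` as a CLM. -/
noncomputable def Vmap (n : ℕ) (k l : Fin n) : (Phase n × ℝ) →L[ℝ] Phase n :=
  ((ContinuousLinearMap.fst ℝ (Fin n → ℝ) (Fin n → ℝ)).comp
    (ContinuousLinearMap.fst ℝ (Phase n) ℝ)).prod
   (ContinuousLinearMap.pi fun j => if j = l then ContinuousLinearMap.snd ℝ (Phase n) ℝ
      else if j = k then 0 else (ContinuousLinearMap.proj j).comp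
        ((ContinuousLinearMap.snd ℝ (Fin n → ℝ) (Fin n → ℝ)).comp
          (ContinuousLinearMap.fst ℝ (Phase n) ℝ)))

theorem Umap_apply (k : Fin n) (z : Phase n × ℝ) :
    Umap n k z = (z.1.1, fun j => if j = k then z.2 else z.1.2 j) := by
  refine Prod.ext rfl ?_
  funext j
  by_cases h : j = k <;> simp [Umap, h]

theorem Vmap_apply (k l : Fin n) (z : Phase n × ℝ) :
    Vmap n k l z = (z.1.1, fun j => if j = l then z.2
      else if j = k then 0 else z.1.2 j) := by
  refine Prod.ext rfl ?_
  funext j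
  by_cases h : j = l <;> by_cases h' : j = k <;> simp [Vmap, h, h'] <;> split <;> simp

theorem Umap_self (k : Fin n) (x : Phase n) : Umap n k (x, x.2 k) = x := by
  rw [Umap_apply]
  refine Prod.ext rfl ?_
  funext j
  by_cases h : j = k <;> simp [h]

theorem Umap_eQ (k : Fin n) (j : Fin n) : Umap n k (eQ n j, 0) = eQ n j := by
  rw [Umap_apply]
  refine Prod.ext rfl ?_
  funext i
  by_cases h : i = k <;> simp [h, eQ, Pi.single_apply]

theorem Umap_ePk (k : Fin n) : Umap n k (eP n k, 0) = 0 := by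
  rw [Umap_apply]
  refine Prod.ext rfl ?_
  funext i
  by_cases h : i = k <;> simp [h, eP, Pi.single_apply]

theorem Umap_eP (k : Fin n) {j : Fin n} (hj : j ≠ k) : Umap n k (eP n j, 0) = eP n j := by
  rw [Umap_apply]
  refine Prod.ext rfl ?_
  funext i
  by_cases h : i = k <;> simp [h, eP, Pi.single_apply, Ne.symm hj]

theorem Umap_unit (k : Fin n) : Umap n k ((0 : Phase n), (1:ℝ)) = eP n k := by
  rw [Umap_apply]
  refine Prod.ext rfl ?_
  funext i
  by_cases h : i = k <;> simp [h, eP, Pi.single_apply]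

theorem Vmap_self (k l : Fin n) (hkl : k ≠ l) (x : Phase n) :
    Vmap n k l (x, x.2 l) = Umap n k (x, 0) := by
  rw [Vmap_apply, Umap_apply]
  refine Prod.ext rfl ?_
  funext j
  rcases eq_or_ne j l with h | h
  · subst h; simp [Ne.symm hkl]
  · rcases eq_or_ne j k with h' | h'
    · subst h'; simp [h, hkl]
    · simp [h, h']

theorem Vmap_ePk (k l : Fin n) : Vmap n k l (eP n k, 0) = 0 := by
  rw [Vmap_apply]
  refine Prod.ext rfl ?_
  funext i
  by_cases h : i = l <;> by_cases h' : i = k <;> simp [h, h', eP, Pi.single_apply]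

theorem Vmap_ePl (k l : Fin n)  (hkl : k ≠ l) : Vmap n k l (eP n l, 0) = 0 := by
  rw [Vmap_apply]
  refine Prod.ext rfl ?_
  funext i
  by_cases h : i = l <;> by_cases h' : i = k <;>
    simp [h, h', eP, Pi.single_apply, Ne.symm hkl]

end Prim

section PrimCalc

variable {n : ℕ}

/-- parametric primitive along the `k`-th momentum coordinate -/
noncomputable def prim (W : (Phase n × ℝ) →L[ℝ] Phase n) (h : Phase n → ℝ) (k : Fin n) :
    Phase n → ℝ :=
  fun x => ∫ t in (0:ℝ)..(x.2 k), h (W (x, t))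

theorem contDiff_pair (k : Fin n) :
    ContDiff ℝ (⊤ : ℕ∞) (fun x : Phase n => ((x, x.2 k) : Phase n × ℝ)) :=
  contDiff_id.prodMk (((ContinuousLinearMap.proj k).comp
    (ContinuousLinearMap.snd ℝ (Fin n → ℝ) (Fin n → ℝ))).contDiff)

theorem hasFDerivAt_pair (k : Fin n) (x : Phase n) :
    HasFDerivAt (fun x : Phase n => ((x, x.2 k) : Phase n × ℝ))
      ((ContinuousLinearMap.id ℝ (Phase n)).prod
        ((ContinuousLinearMap.proj k).comp
          (ContinuousLinearMap.snd ℝ (Fin n → ℝ) (Fin n → ℝ)))) x :=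
  (hasFDerivAt_id x).prodMk (((ContinuousLinearMap.proj k).comp
    (ContinuousLinearMap.snd ℝ (Fin n → ℝ) (Fin n → ℝ))).hasFDerivAt)

theorem prim_contDiff (W : (Phase n × ℝ) →L[ℝ] Phase n) {h : Phase n → ℝ}
    (hh : ContDiff ℝ (⊤ : ℕ∞) h) (k : Fin n) : ContDiff ℝ (⊤ : ℕ∞) (prim W h k) := by
  have h1 : ContDiff ℝ (⊤ : ℕ∞) (fun z : Phase n × ℝ => h (W z)) := hh.comp W.contDiff
  have h3 : prim W h k = (fun z : Phase n × ℝ => ∫ t in (0:ℝ)..z.2, h (W (z.1, t)))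
      ∘ (fun x : Phase n => (x, x.2 k)) := rfl
  rw [h3]
  exact (master_contDiff h1).comp (contDiff_pair k)

theorem D1_comp_eval (W : (Phase n × ℝ) →L[ℝ] Phase n) {h : Phase n → ℝ}
    (hh : ContDiff ℝ (⊤ : ℕ∞) h) (z : Phase n × ℝ) (w : Phase n) :
    D1 (fun z : Phase n × ℝ => h (W z)) z w = fderiv ℝ h (W z) (W (w, 0)) := by
  have hc : HasFDerivAt (fun z : Phase n × ℝ => h (W z))
      ((fderiv ℝ h (W z)).comp W) z :=
    ((hh.differentiable (by norm_num) (W z)).hasFDerivAt).comp z W.hasFDerivAt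
  rw [D1, hc.fderiv]
  rfl

theorem cont_integrand (W : (Phase n × ℝ) →L[ℝ] Phase n) {h : Phase n → ℝ}
    (hh : ContDiff ℝ (⊤ : ℕ∞) h) (x : Phase n) (w : Phase n) :
    Continuous fun t : ℝ => fderiv ℝ h (W (x, t)) w := by
  have h1 : Continuous (fderiv ℝ h) := (contDiff_infty_iff_fderiv.1 hh).2.continuous
  exact (h1.comp (W.continuous.comp (continuous_const.prodMk continuous_id))).clm_apply
    continuous_const

theorem prim_fderiv (W : (Phase n × ℝ) →L[ℝ] Phase n) {h : Phase n → ℝ}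
    (hh : ContDiff ℝ (⊤ : ℕ∞) h) (k : Fin n) (x : Phase n) (w : Phase n) :
    fderiv ℝ (prim W h k) x w
      = (∫ t in (0:ℝ)..(x.2 k), fderiv ℝ h (W (x, t)) (W (w, 0)))
        + (w.2 k) • h (W (x, x.2 k)) := by
  have h1 : ContDiff ℝ (⊤ : ℕ∞) (fun z : Phase n × ℝ => h (W z)) := hh.comp W.contDiff
  have hJ := master_hasFDerivAt h1 (x, x.2 k)
  have hP := hJ.comp x (hasFDerivAt_pair k x)
  have hP' : HasFDerivAt (prim W h k) _ x := hP
  rw [hP'.fderiv]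
  have hint : IntervalIntegrable (fun t => D1 (fun z : Phase n × ℝ => h (W z)) (x, t))
      volume 0 (x.2 k) :=
    ((contDiff_D1 h1).continuous.comp
      (continuous_const.prodMk continuous_id)).intervalIntegrable _ _
  rw [ContinuousLinearMap.comp_apply, ContinuousLinearMap.add_apply,
    ContinuousLinearMap.comp_apply, ContinuousLinearMap.smulRight_apply]
  have happ : ((ContinuousLinearMap.id ℝ (Phase n)).prod
      ((ContinuousLinearMap.proj k).comp
        (ContinuousLinearMap.snd ℝ (Fin n → ℝ) (Fin n → ℝ)))) w = (w, w.2 k) := rfl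
  rw [happ]
  congr 1
  · rw [show (ContinuousLinearMap.fst ℝ (Phase n) ℝ) ((w, w.2 k) : Phase n × ℝ) = w from rfl]
    rw [ContinuousLinearMap.intervalIntegral_apply hint w]
    refine intervalIntegral.integral_congr fun t _ => ?_
    exact D1_comp_eval W hh (x, t) w

theorem prim_FTC {h : Phase n → ℝ} (hh : ContDiff ℝ (⊤ : ℕ∞) h) (k : Fin n) (x : Phase n) :
    (∫ t in (0:ℝ)..(x.2 k), fderiv ℝ h (Umap n k (x, t)) (eP n k))
      = h x - h (Umap n k (x, 0)) := by
  have hD : ∀ t ∈ Set.uIcc (0:ℝ) (x.2 k),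
      HasDerivAt (fun s => h (Umap n k (x, s)))
        (fderiv ℝ h (Umap n k (x, t)) (eP n k)) t := by
    intro t _
    have hin : HasDerivAt (fun s : ℝ => ((x, s) : Phase n × ℝ)) ((0 : Phase n), (1:ℝ)) t :=
      (hasDerivAt_const t x).prodMk (hasDerivAt_id t)
    have hU : HasDerivAt (fun s : ℝ => Umap n k (x, s)) (Umap n k ((0 : Phase n), (1:ℝ))) t :=
      (Umap n k).hasFDerivAt.comp_hasDerivAt t hin
    rw [Umap_unit] at hU
    exact ((hh.differentiable (by norm_num) _).hasFDerivAt).comp_hasDerivAt t hU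
  rw [intervalIntegral.integral_eq_sub_of_hasDerivAt hD
    ((cont_integrand (Umap n k) hh x (eP n k)).intervalIntegrable _ _)]
  rw [Umap_self]

end PrimCalc


/-- every smooth divergence-free vector field `X` on `ℝ^{2n}` (`n ≥ 2`) is
described by the general volume-preserving equations: there are smooth functions `Q i j`,
`P i j` (antisymmetric) and `A i j` whose combination of first partial derivatives gives
the components of `X`. -/
theorem stmt16 (n : ℕ) (hn : 2 ≤ n) (X : Phase n → Phase n)
    (hX : ContDiff ℝ (⊤ : ℕ∞) X)
    (hdiv : ∀ x : Phase n,
      (∑ i, fderiv ℝ (fun y => (X y).1 i) x (eQ n i)) +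
        (∑ i, fderiv ℝ (fun y => (X y).2 i) x (eP n i)) = 0) :
    ∃ Qf Pf Af : Fin n → Fin n → Phase n → ℝ,
      (∀ i j, ContDiff ℝ (⊤ : ℕ∞) (Qf i j)) ∧ (∀ i j, ContDiff ℝ (⊤ : ℕ∞) (Pf i j)) ∧
      (∀ i j, ContDiff ℝ (⊤ : ℕ∞) (Af i j)) ∧
      (∀ i j x, Qf j i x = -Qf i j x) ∧ (∀ i j x, Pf j i x = -Pf i j x) ∧
      (∀ (x : Phase n) (i : Fin n),
        (X x).1 i = ∑ j, (fderiv ℝ (Pf i j) x (eQ n j) + fderiv ℝ (Af j j) x (eP n i)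
          - fderiv ℝ (Af i j) x (eP n j))) ∧
      (∀ (x : Phase n) (i : Fin n),
        (X x).2 i = ∑ j, (fderiv ℝ (Qf i j) x (eP n j) - fderiv ℝ (Af j j) x (eQ n i)
          + fderiv ℝ (Af j i) x (eQ n j))) := by
  haveI : NeZero n := ⟨by omega⟩
  have h10 : ((1 : Fin n) : ℕ) = 1 := by
    rw [Fin.val_one']; exact Nat.mod_eq_of_lt (by omega)
  have hk : (0 : Fin n) ≠ 1 := by
    intro h
    have := congrArg Fin.val h
    rw [h10] at this
    simp at this
  have hn1 : ((n:ℝ) - 1) ≠ 0 := by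
    have h2 : (2:ℝ) ≤ (n:ℝ) := by exact_mod_cast hn
    intro h; linarith
  set c0 : ℝ := ((n:ℝ) - 1)⁻¹ with hc0
  have hc1 : ((n:ℝ) - 1) * c0 = 1 := mul_inv_cancel₀ hn1
  have hq : ∀ i : Fin n, ContDiff ℝ (⊤ : ℕ∞) (fun y : Phase n => (X y).1 i) := fun i =>
    (contDiff_pi.1 (contDiff_fst.comp hX)) i
  have hp : ∀ i : Fin n, ContDiff ℝ (⊤ : ℕ∞) (fun y : Phase n => (X y).2 i) := fun i =>
    (contDiff_pi.1 (contDiff_snd.comp hX)) i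
  -- the basic potentials
  set FF : Fin n → Phase n → ℝ :=
    fun i => prim (Umap n 0) (fun y => (X y).1 i) 0 with hFF
  set GG : Fin n → Phase n → ℝ :=
    fun i => prim (Umap n 0) (fun y => (X y).2 i) 0 with hGG
  set CC : Phase n → ℝ := prim (Vmap n 0 1) (fun y => (X y).2 0) 1 with hCC
  have hFFc : ∀ i, ContDiff ℝ (⊤ : ℕ∞) (FF i) := fun i => prim_contDiff _ (hq i) 0
  have hGGc : ∀ i, ContDiff ℝ (⊤ : ℕ∞) (GG i) := fun i => prim_contDiff _ (hp i) 0
  have hCCc : ContDiff ℝ (⊤ : ℕ∞) CC := prim_contDiff _ (hp 0) 1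
  have hFFd : ∀ i x, DifferentiableAt ℝ (FF i) x := fun i x =>
    (hFFc i).differentiable (by norm_num) x
  have hGGd : ∀ i x, DifferentiableAt ℝ (GG i) x := fun i x =>
    (hGGc i).differentiable (by norm_num) x
  have hCCd : ∀ x, DifferentiableAt ℝ CC x := fun x =>
    hCCc.differentiable (by norm_num) x
  set Gm : Fin n → Phase n → ℝ :=
    fun a x => (if a = 0 then (0:ℝ) else 1) * GG a x - (if a = 1 then (1:ℝ) else 0) * CC x
    with hGm
  have hGmc : ∀ a, ContDiff ℝ (⊤ : ℕ∞) (Gm a) := fun a =>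
    (contDiff_const.mul (hGGc a)).sub (contDiff_const.mul hCCc)
  have hGmd : ∀ a x, DifferentiableAt ℝ (Gm a) x := fun a x =>
    (hGmc a).differentiable (by norm_num) x
  set Af : Fin n → Fin n → Phase n → ℝ :=
    fun a b x => (if a = b then c0 else 0) * FF 0 x - (if b = 0 then (1:ℝ) else 0) * FF a x
    with hAf
  set Qf : Fin n → Fin n → Phase n → ℝ :=
    fun a b x => (if b = 0 then (1:ℝ) else 0) * Gm a x - (if a = 0 then (1:ℝ) else 0) * Gm b x
    with hQf
  set Pf : Fin n → Fin n → Phase n → ℝ := fun _ _ _ => 0 with hPf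
  -- fderiv computation rules
  have hder2 : ∀ (c d : ℝ) (f g : Phase n → ℝ), (∀ x, DifferentiableAt ℝ f x) →
      (∀ x, DifferentiableAt ℝ g x) → ∀ (x : Phase n) (w : Phase n),
      fderiv ℝ (fun y => c * f y - d * g y) x w
        = c * fderiv ℝ f x w - d * fderiv ℝ g x w := by
    intro c d f g hf hg x w
    rw [fderiv_fun_sub ((hf x).const_mul c) ((hg x).const_mul d),
      fderiv_const_mul (hf x), fderiv_const_mul (hg x)]
    simp
  have hAf_f : ∀ a b x w, fderiv ℝ (Af a b) x w
      = (if a = b then c0 else 0) * fderiv ℝ (FF 0) x w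
        - (if b = 0 then (1:ℝ) else 0) * fderiv ℝ (FF a) x w := by
    intro a b x w
    simp only [hAf]
    exact hder2 _ _ _ _ (hFFd 0) (hFFd a) x w
  have hGm_f : ∀ a x w, fderiv ℝ (Gm a) x w
      = (if a = 0 then (0:ℝ) else 1) * fderiv ℝ (GG a) x w
        - (if a = 1 then (1:ℝ) else 0) * fderiv ℝ CC x w := by
    intro a x w
    simp only [hGm]
    exact hder2 _ _ _ _ (hGGd a) hCCd x w
  have hQf_f : ∀ a b x w, fderiv ℝ (Qf a b) x w
      = (if b = 0 then (1:ℝ) else 0) * fderiv ℝ (Gm a) x w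
        - (if a = 0 then (1:ℝ) else 0) * fderiv ℝ (Gm b) x w := by
    intro a b x w
    simp only [hQf]
    exact hder2 _ _ _ _ (hGmd a) (hGmd b) x w
  have hPf_f : ∀ (a b : Fin n) x w, fderiv ℝ (Pf a b) x w = 0 := by
    intro a b x w
    simp only [hPf, fderiv_fun_const]
    simp
  -- directional derivative values
  have hFF_eP0 : ∀ i x, fderiv ℝ (FF i) x (eP n 0) = (X x).1 i := by
    intro i x
    rw [hFF]
    rw [prim_fderiv _ (hq i) 0 x (eP n 0), Umap_ePk, Umap_self]
    simp [eP, Pi.single_eq_same]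
  have hGG_eP0 : ∀ i x, fderiv ℝ (GG i) x (eP n 0) = (X x).2 i := by
    intro i x
    rw [hGG]
    rw [prim_fderiv _ (hp i) 0 x (eP n 0), Umap_ePk, Umap_self]
    simp [eP, Pi.single_eq_same]
  have hFF_eQ : ∀ i j x, fderiv ℝ (FF i) x (eQ n j)
      = ∫ t in (0:ℝ)..(x.2 0), fderiv ℝ (fun y => (X y).1 i) (Umap n 0 (x, t)) (eQ n j) := by
    intro i j x
    rw [hFF]
    rw [prim_fderiv _ (hq i) 0 x (eQ n j), Umap_eQ]
    simp [eQ]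
  have hGG_ePj : ∀ (j : Fin n), j ≠ 0 → ∀ x, fderiv ℝ (GG j) x (eP n j)
      = ∫ t in (0:ℝ)..(x.2 0), fderiv ℝ (fun y => (X y).2 j) (Umap n 0 (x, t)) (eP n j) := by
    intro j hj x
    rw [hGG]
    rw [prim_fderiv _ (hp j) 0 x (eP n j), Umap_eP 0 hj]
    simp [eP, Pi.single_eq_of_ne (Ne.symm hj)]
  have hCC_eP0 : ∀ x, fderiv ℝ CC x (eP n 0) = 0 := by
    intro x
    rw [hCC]
    rw [prim_fderiv _ (hp 0) 1 x (eP n 0), Vmap_ePk]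
    simp [eP, Pi.single_eq_of_ne (Ne.symm hk), Pi.single_eq_of_ne hk]
  have hCC_eP1 : ∀ x, fderiv ℝ CC x (eP n 1) = (X (Umap n 0 (x, 0))).2 0 := by
    intro x
    rw [hCC]
    rw [prim_fderiv _ (hp 0) 1 x (eP n 1), Vmap_ePl 0 1 hk, Vmap_self 0 1 hk]
    simp [eP, Pi.single_eq_same]
  have hFTC : ∀ x, (∫ t in (0:ℝ)..(x.2 0),
        fderiv ℝ (fun y => (X y).2 0) (Umap n 0 (x, t)) (eP n 0))
      = (X x).2 0 - (X (Umap n 0 (x, 0))).2 0 := fun x => prim_FTC (hp 0) 0 x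
  -- sum helpers
  have spick : ∀ (v : Fin n → ℝ) (c : ℝ) (k : Fin n),
      (∑ j, (if j = k then c else 0) * v j) = c * v k := by
    intro v c k
    simp [ite_mul, zero_mul]
  have spickl : ∀ (v : Fin n → ℝ) (c : ℝ) (k : Fin n),
      (∑ j, (if k = j then c else 0) * v j) = c * v k := by
    intro v c k
    simp [ite_mul, zero_mul]
  have hcard : (Finset.univ : Finset (Fin n)).card = n := by simp
  -- Identity 1
  have hid1 : ∀ (x : Phase n) (i : Fin n),
      (X x).1 i = ∑ j, (fderiv ℝ (Pf i j) x (eQ n j) + fderiv ℝ (Af j j) x (eP n i)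
        - fderiv ℝ (Af i j) x (eP n j)) := by
    intro x i
    have hstep : ∀ j : Fin n, fderiv ℝ (Pf i j) x (eQ n j) + fderiv ℝ (Af j j) x (eP n i)
        - fderiv ℝ (Af i j) x (eP n j)
        = c0 * fderiv ℝ (FF 0) x (eP n i)
          - (if j = 0 then (1:ℝ) else 0) * fderiv ℝ (FF j) x (eP n i)
          - (if i = j then c0 else 0) * fderiv ℝ (FF 0) x (eP n j)
          + (if j = 0 then (1:ℝ) else 0) * fderiv ℝ (FF i) x (eP n j) := by
      intro j
      rw [hPf_f i j x (eQ n j), hAf_f j j x (eP n i), hAf_f i j x (eP n j)]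
      simp only [eq_self_iff_true, if_true]
      ring
    rw [Finset.sum_congr rfl fun j _ => hstep j]
    rw [Finset.sum_add_distrib, Finset.sum_sub_distrib, Finset.sum_sub_distrib]
    simp only [spick, spickl]
    rw [Finset.sum_const, hcard, nsmul_eq_mul, hFF_eP0 i x]
    linear_combination (-(fderiv ℝ (FF 0) x (eP n i))) * hc1
  -- Identity 2
  have hid2 : ∀ (x : Phase n) (i : Fin n),
      (X x).2 i = ∑ j, (fderiv ℝ (Qf i j) x (eP n j) - fderiv ℝ (Af j j) x (eQ n i)
        + fderiv ℝ (Af j i) x (eQ n j)) := by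
    intro x i
    have hstep : ∀ j : Fin n, fderiv ℝ (Qf i j) x (eP n j) - fderiv ℝ (Af j j) x (eQ n i)
        + fderiv ℝ (Af j i) x (eQ n j)
        = (if j = 0 then (1:ℝ) else 0) * fderiv ℝ (Gm i) x (eP n j)
          - (if i = 0 then (1:ℝ) else 0) * fderiv ℝ (Gm j) x (eP n j)
          - c0 * fderiv ℝ (FF 0) x (eQ n i)
          + (if j = 0 then (1:ℝ) else 0) * fderiv ℝ (FF j) x (eQ n i)
          + (if j = i then c0 else 0) * fderiv ℝ (FF 0) x (eQ n j)
          - (if i = 0 then (1:ℝ) else 0) * fderiv ℝ (FF j) x (eQ n j) := by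
      intro j
      rw [hQf_f i j x (eP n j), hAf_f j j x (eQ n i), hAf_f j i x (eQ n j)]
      simp only [eq_self_iff_true, if_true]
      ring
    rw [Finset.sum_congr rfl fun j _ => hstep j]
    rw [Finset.sum_sub_distrib, Finset.sum_add_distrib, Finset.sum_add_distrib,
      Finset.sum_sub_distrib, Finset.sum_sub_distrib]
    simp only [spick]
    rw [Finset.sum_const, hcard, nsmul_eq_mul, ← Finset.mul_sum, ← Finset.mul_sum, one_mul]
    by_cases hi : i = 0
    · subst hi
      simp only [eq_self_iff_true, if_true, one_mul]
      have hGm0 : fderiv ℝ (Gm 0) x (eP n 0) = 0 := by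
        rw [hGm_f]
        simp [hk]
      rw [hGm0]
      -- the divergence argument
      have hcont2 : ∀ j : Fin n, Continuous fun t : ℝ =>
          (if j = 0 then (0:ℝ) else 1) * fderiv ℝ (fun y => (X y).2 j)
            (Umap n 0 (x, t)) (eP n j) := fun j =>
        continuous_const.mul (cont_integrand (Umap n 0) (hp j) x (eP n j))
      have hcont1 : ∀ j : Fin n, Continuous fun t : ℝ =>
          fderiv ℝ (fun y => (X y).1 j) (Umap n 0 (x, t)) (eQ n j) := fun j =>
        cont_integrand (Umap n 0) (hq j) x (eQ n j)
      have hGmsum : ∀ j : Fin n, fderiv ℝ (Gm j) x (eP n j)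
          = (∫ t in (0:ℝ)..(x.2 0), (if j = 0 then (0:ℝ) else 1)
              * fderiv ℝ (fun y => (X y).2 j) (Umap n 0 (x, t)) (eP n j))
            - (if j = 1 then (1:ℝ) else 0) * fderiv ℝ CC x (eP n j) := by
        intro j
        rw [hGm_f]
        congr 1
        by_cases hj : j = 0
        · subst hj
          simp
        · simp only [if_neg hj, one_mul]
          exact hGG_ePj j hj x
      have key : (∑ j, fderiv ℝ (Gm j) x (eP n j)) + (∑ j, fderiv ℝ (FF j) x (eQ n j))
          = -(X x).2 0 := by
        rw [Finset.sum_congr rfl fun j _ => hGmsum j, Finset.sum_sub_distrib]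
        simp only [spick]
        rw [one_mul, hCC_eP1 x]
        rw [Finset.sum_congr rfl fun j _ => hFF_eQ j j x]
        rw [← intervalIntegral.integral_finset_sum
          (fun j _ => (hcont2 j).intervalIntegrable 0 (x.2 0))]
        rw [← intervalIntegral.integral_finset_sum
          (fun j _ => (hcont1 j).intervalIntegrable 0 (x.2 0))]
        have hIadd : (∫ t in (0:ℝ)..(x.2 0), ∑ j, (if j = 0 then (0:ℝ) else 1)
              * fderiv ℝ (fun y => (X y).2 j) (Umap n 0 (x, t)) (eP n j))
            + (∫ t in (0:ℝ)..(x.2 0), ∑ j,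
                fderiv ℝ (fun y => (X y).1 j) (Umap n 0 (x, t)) (eQ n j))
            = ∫ t in (0:ℝ)..(x.2 0),
                ((∑ j, (if j = 0 then (0:ℝ) else 1)
                  * fderiv ℝ (fun y => (X y).2 j) (Umap n 0 (x, t)) (eP n j))
                + (∑ j, fderiv ℝ (fun y => (X y).1 j) (Umap n 0 (x, t)) (eQ n j))) := by
          rw [intervalIntegral.integral_add
            ((continuous_finset_sum _ fun j _ => hcont2 j).intervalIntegrable 0 (x.2 0))
            ((continuous_finset_sum _ fun j _ => hcont1 j).intervalIntegrable 0 (x.2 0))]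
        have hpoint : ∀ t : ℝ,
            ((∑ j, (if j = 0 then (0:ℝ) else 1)
              * fderiv ℝ (fun y => (X y).2 j) (Umap n 0 (x, t)) (eP n j))
            + (∑ j, fderiv ℝ (fun y => (X y).1 j) (Umap n 0 (x, t)) (eQ n j)))
            = -(fderiv ℝ (fun y => (X y).2 0) (Umap n 0 (x, t)) (eP n 0)) := by
          intro t
          have hd := hdiv (Umap n 0 (x, t))
          have hsplit : (∑ j, (if j = 0 then (0:ℝ) else 1)
              * fderiv ℝ (fun y => (X y).2 j) (Umap n 0 (x, t)) (eP n j))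
              = (∑ j, fderiv ℝ (fun y => (X y).2 j) (Umap n 0 (x, t)) (eP n j))
                - fderiv ℝ (fun y => (X y).2 0) (Umap n 0 (x, t)) (eP n 0) := by
            have : ∀ j : Fin n, (if j = 0 then (0:ℝ) else 1)
                * fderiv ℝ (fun y => (X y).2 j) (Umap n 0 (x, t)) (eP n j)
                = fderiv ℝ (fun y => (X y).2 j) (Umap n 0 (x, t)) (eP n j)
                  - (if j = 0 then (1:ℝ) else 0)
                    * fderiv ℝ (fun y => (X y).2 j) (Umap n 0 (x, t)) (eP n j) := by
              intro j
              by_cases hj : j = 0 <;> simp [hj]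
            rw [Finset.sum_congr rfl fun j _ => this j, Finset.sum_sub_distrib]
            simp only [spick]
            rw [one_mul]
          rw [hsplit]
          linarith [hd]
        have hIval : (∫ t in (0:ℝ)..(x.2 0),
            ((∑ j, (if j = 0 then (0:ℝ) else 1)
              * fderiv ℝ (fun y => (X y).2 j) (Umap n 0 (x, t)) (eP n j))
            + (∑ j, fderiv ℝ (fun y => (X y).1 j) (Umap n 0 (x, t)) (eQ n j))))
            = -((X x).2 0 - (X (Umap n 0 (x, 0))).2 0) := by
          rw [intervalIntegral.integral_congr (fun t _ => hpoint t),
            intervalIntegral.integral_neg, hFTC x]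
        linarith [hIadd, hIval]
      linear_combination key + fderiv ℝ (FF 0) x (eQ n 0) * hc1
    · simp only [if_neg hi, zero_mul]
      have hGmi : fderiv ℝ (Gm i) x (eP n 0) = (X x).2 i := by
        rw [hGm_f]
        rw [hGG_eP0 i x, hCC_eP0 x]
        simp [hi]
      rw [hGmi]
      linear_combination fderiv ℝ (FF 0) x (eQ n i) * hc1
  exact ⟨Qf, Pf, Af,
    fun i j => by simp only [hQf]; exact (contDiff_const.mul (hGmc i)).sub (contDiff_const.mul (hGmc j)),
    fun i j => by simp only [hPf]; exact contDiff_const,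
    fun i j => by simp only [hAf]; exact (contDiff_const.mul (hFFc 0)).sub (contDiff_const.mul (hFFc i)),
    fun i j x => by simp only [hQf]; ring,
    fun i j x => by simp only [hPf]; ring,
    hid1, hid2⟩
end
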